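/- arXiv:1802.04067 — 8 statements merged into one kernel-verified Lean document; each statement's English description precedes it below -/
import Mathlib

section
/- Let P ⊆ {0,1}^ℕ be a measurable set of branches with μ(P) > 0. Then there exists an everywhere thick subtree T ⊆ {0,1}^* whose root is the empty word ε such that every branch all of whose finite prefixes belong to T lies in P (i.e. vec(T) ⊆ P). -/
/-!
By inner regularity `P` contains a closed set `C` of positive measure. Take `T` to be the nodes
`w` with `0 < μ (C ∩ cylinder w)`. The branches of `C` leaving `T` lie in countably many null cylinders,
so `vec(T)` carries all the mass of `C` below every node of `T`, which makes `T` everywhere thick;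
and a branch of `vec(T)` has every prefix cylinder meeting `C`, so it lies in the closed set `C`.
-/

open MeasureTheory

/-- The cylinder of a finite binary word `w`: the set of branches of the infinite
binary tree that visit the node `w`, i.e. have `w` as a prefix. -/
def cylinder (w : List Bool) : Set (ℕ → Bool) :=
  {b | ∀ i : Fin w.length, b i = w.get i}

/-- `μ` is the uniform probability measure on the space of branches of the infinite
binary tree: the infinite product of fair-coin Bernoulli(1/2) measures, characterized
by giving each cylinder of a word of length `k` measure `2⁻ᵏ`. -/
def IsUniformBernoulli (μ : Measure (ℕ → Bool)) : Prop :=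
  IsProbabilityMeasure μ ∧ ∀ w : List Bool, μ (cylinder w) = (2 : ENNReal)⁻¹ ^ w.length

/-- The length-`k` prefix of a branch `b`. -/
def branchPrefix (b : ℕ → Bool) (k : ℕ) : List Bool :=
  List.ofFn fun i : Fin k => b i

/-- `vecT T`: the set of branches all of whose finite prefixes belong to `T`. -/
def vecT (T : Set (List Bool)) : Set (ℕ → Bool) :=
  {b | ∀ k : ℕ, branchPrefix b k ∈ T}

open Set Filter Topology

lemma cylinder_nil : cylinder [] = univ :=
  eq_univ_of_forall fun _ i => i.elim0

lemma mem_cylinder_branchPrefix (b : ℕ → Bool) (k : ℕ) : b ∈ cylinder (branchPrefix b k) := by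
  intro i
  rw [List.get_eq_getElem]
  simp [branchPrefix]

lemma cylinder_subset_of_isPrefix {m n : List Bool} (h : m <+: n) : cylinder n ⊆ cylinder m := by
  intro b hb i
  have hb_i := hb ⟨i, i.isLt.trans_le h.length_le⟩
  simp only [List.get_eq_getElem] at hb_i ⊢
  rw [hb_i, h.getElem i.isLt]

lemma mem_closure_of_forall_inter_cylinder_nonempty {C : Set (ℕ → Bool)} {b : ℕ → Bool}
    (h : ∀ k, (C ∩ cylinder (branchPrefix b k)).Nonempty) : b ∈ closure C := by
  choose c hc using h
  have hc_tendsto : Tendsto c atTop (𝓝 b) := by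
    rw [tendsto_pi_nhds]
    intro i
    refine tendsto_const_nhds.congr' ?_
    filter_upwards [eventually_gt_atTop i] with k hk
    have hc_i := (hc k).2 ⟨i, by simpa [branchPrefix] using hk⟩
    simp only [List.get_eq_getElem, branchPrefix, List.getElem_ofFn] at hc_i
    exact hc_i.symm
  exact mem_closure_of_tendsto hc_tendsto (Eventually.of_forall fun k => (hc k).1)

section supportTree

variable (μ : Measure (ℕ → Bool)) (C : Set (ℕ → Bool))

def supportTree : Set (List Bool) := {w | 0 < μ (C ∩ cylinder w)}

lemma nil_mem_supportTree (hC : 0 < μ C) : [] ∈ supportTree μ C := by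
  simpa [supportTree, cylinder_nil] using hC

lemma mem_supportTree_of_isPrefix {m n : List Bool} (hn : n ∈ supportTree μ C) (h : m <+: n) :
    m ∈ supportTree μ C :=
  hn.trans_le (measure_mono (inter_subset_inter_right _ (cylinder_subset_of_isPrefix h)))

lemma measure_diff_vecT_supportTree : μ (C \ vecT (supportTree μ C)) = 0 := by
  have h_subset : C \ vecT (supportTree μ C) ⊆ ⋃ w ∈ (supportTree μ C)ᶜ, C ∩ cylinder w := by
    rintro b ⟨hbC, hb⟩
    obtain ⟨k, hk⟩ := not_forall.1 hb
    exact mem_biUnion hk ⟨hbC, mem_cylinder_branchPrefix b k⟩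
  refine measure_mono_null h_subset ((measure_biUnion_null_iff (to_countable _)).2 fun w hw => ?_)
  simpa [supportTree] using hw

lemma measure_vecT_supportTree_inter_cylinder_pos {n : List Bool} (hn : n ∈ supportTree μ C) :
    0 < μ (vecT (supportTree μ C) ∩ cylinder n) :=
  calc 0 < μ (C ∩ cylinder n) := hn
    _ = μ ((C ∩ cylinder n) \ (C \ vecT (supportTree μ C))) :=
      (measure_sdiff_null (measure_diff_vecT_supportTree μ C)).symm
    _ ≤ μ (vecT (supportTree μ C) ∩ cylinder n) :=
      measure_mono fun _ hb => ⟨not_not.1 fun h => hb.2 ⟨hb.1.1, h⟩, hb.1.2⟩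

lemma vecT_supportTree_subset_closure : vecT (supportTree μ C) ⊆ closure C := fun _ hb =>
  mem_closure_of_forall_inter_cylinder_nonempty fun k => nonempty_of_measure_ne_zero (hb k).ne'

end supportTree

/-- Every measurable set of branches of positive measure contains `vec(T)` for some
everywhere thick subtree `T` rooted at the empty word. -/
theorem stmt_0 (μ : Measure (ℕ → Bool)) (hμ : IsUniformBernoulli μ)
    (P : Set (ℕ → Bool)) (hmeas : MeasurableSet P) (hpos : 0 < μ P) :
    ∃ T : Set (List Bool),
      ([] : List Bool) ∈ T ∧
      (∀ n ∈ T, ∀ m : List Bool, m <+: n → m ∈ T) ∧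
      (∀ n ∈ T, 0 < μ (vecT T ∩ cylinder n)) ∧
      vecT T ⊆ P := by
  have : IsProbabilityMeasure μ := hμ.1
  obtain ⟨C, hCP, hC_closed, hC_pos⟩ :=
    hmeas.exists_lt_isClosed_of_ne_top (measure_ne_top μ P) hpos
  refine ⟨supportTree μ C, nil_mem_supportTree μ C hC_pos,
    fun n hn m hm => mem_supportTree_of_isPrefix μ C hn hm,
    fun n hn => measure_vecT_supportTree_inter_cylinder_pos μ C hn, ?_⟩
  calc vecT (supportTree μ C) ⊆ closure C := vecT_supportTree_subset_closure μ C
    _ = C := hC_closed.closure_eq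
    _ ⊆ P := hCP
end

section
/- For every finite set C there exist a finite linearly ordered set Q with |Q| ≤ |C|^{|C|+1}, an initial state q₀ ∈ Q, a transition function δ : Q × C → Q, and a map φ : Q → 2^C with the following property: for every infinite word u ∈ C^ℕ, letting the run be r₀ = q₀ and r_{n+1} = δ(r_n, u_n), the set L^∞(u) of letters of C occurring infinitely often in u equals φ(m), where m is the largest state (for the order on Q) occurring infinitely often in the run (r_n)_{n∈ℕ}. -/
/-!
The automaton keeps the letters of `C` in a list ordered by last appearance (most recent first)
and, on reading a letter, moves it to the front and records the position it was taken from.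
Let `L` be the set of letters read infinitely often and `k = |L|`. Once only letters of `L` are
read and each of them has been read at least once, the letters ahead of any `c ∈ L` were all
read after the last `c`, so `L` occupies exactly the first `k` positions from then on: every
recorded position is `< k`, and the letter at position `k - 1` stays there until it is read
again, so position `k - 1` is recorded infinitely often. Ordering states by their recorded
position first, the largest recurring state records `k - 1`, and its first `k` letters are `L`.
-/

open Filter

namespace LastAppearanceRecord

theorem eventually_frequently_eq {ι C : Type*} [Finite C] {l : Filter ι} (u : ι → C) :
    ∀ᶠ s in l, ∃ᶠ t in l, u t = u s := by
  have key : ∀ c, ∀ᶠ s in l, u s = c → ∃ᶠ t in l, u t = c := fun c => by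
    by_cases h : ∃ᶠ t in l, u t = c
    · exact .of_forall fun _ _ => h
    · exact (not_frequently.1 h).mono fun _ hs hs' => absurd hs' hs
  filter_upwards [eventually_all.2 key] with s hs using hs (u s) rfl

theorem exists_le_of_frequently {α : Type*} [Finite α] [Preorder α] {r : ℕ → α} {m : α}
    (hmax : ∀ q, (∃ᶠ s in atTop, r s = q) → q ≤ m) {P : α → Prop}
    (hP : ∃ᶠ s in atTop, P (r s)) : ∃ q ≤ m, P q := by
  obtain ⟨q, hq⟩ := frequently_exists.1 <|
    hP.mono fun s hs => (⟨r s, hs, rfl⟩ : ∃ q, P q ∧ r s = q)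
  exact ⟨q, hmax q (hq.mono fun _ h => h.2), hq.exists.elim fun _ h => h.1⟩

variable {C : Type*} {n : ℕ}

theorem val_lt_card_of_forall_le_mem (σ : C ≃ Fin n) {L : Finset C} {c : C}
    (h : ∀ d, σ d ≤ σ c → d ∈ L) : (σ c : ℕ) < L.card := by
  have := Finset.card_le_card_of_injOn σ.symm (s := Finset.Iic (σ c)) (t := L)
    (fun i hi => h _ (by simpa using hi)) σ.symm.injective.injOn
  rw [Fin.card_Iic] at this
  omega

theorem mem_of_val_lt_card (σ : C ≃ Fin n) {L : Finset C} (hL : ∀ d ∈ L, (σ d : ℕ) < L.card)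
    {c : C} (hc : (σ c : ℕ) < L.card) : c ∈ L := by
  classical
  by_contra hcL
  have := Finset.card_le_card_of_injOn (fun d => (σ d : ℕ)) (s := insert c L)
    (t := Finset.range L.card) ?_ fun x _ y _ hxy => σ.injective (Fin.ext hxy)
  · rw [Finset.card_insert_of_notMem hcL, Finset.card_range] at this
    omega
  · intro d hd
    rcases Finset.mem_insert.1 hd with rfl | hd
    exacts [Finset.mem_range.2 hc, Finset.mem_range.2 (hL d hd)]

/-- A list of the letters of `C` without repetitions is encoded by the positions `σ c`. -/
def moveToFront (σ : C ≃ Fin n) (a : C) : C ≃ Fin n :=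
  σ.trans (σ a).cycleRange

section MoveToFront

variable {σ : C ≃ Fin n} {a x y : C}

@[simp]
theorem val_moveToFront_self : (moveToFront σ a a : ℕ) = 0 := by
  simp [moveToFront, Fin.coe_cycleRange_of_le le_rfl]

theorem moveToFront_apply_of_lt (h : σ a < σ x) : moveToFront σ a x = σ x :=
  Fin.cycleRange_of_gt h

theorem val_moveToFront_of_ne (hx : x ≠ a) :
    (moveToFront σ a x : ℕ) = if σ x < σ a then (σ x : ℕ) + 1 else σ x := by
  split_ifs with h
  · exact Fin.coe_cycleRange_of_lt h
  · rw [moveToFront_apply_of_lt ((not_lt.1 h).lt_of_ne fun h' => hx (σ.injective h').symm)]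

theorem moveToFront_lt_moveToFront_iff (hx : x ≠ a) (hy : y ≠ a) :
    moveToFront σ a x < moveToFront σ a y ↔ σ x < σ y := by
  have hxy := val_moveToFront_of_ne (σ := σ) hx
  have hyx := val_moveToFront_of_ne (σ := σ) hy
  have hxa : (σ x : ℕ) ≠ σ a := fun h => hx (σ.injective (Fin.ext h))
  have hya : (σ y : ℕ) ≠ σ a := fun h => hy (σ.injective (Fin.ext h))
  simp only [Fin.lt_def] at hxy hyx ⊢
  split_ifs at hxy hyx <;> omega

end MoveToFront

section MoveToFrontRun

variable {u : ℕ → C} {σ : ℕ → C ≃ Fin n} (hσ : ∀ s, σ (s + 1) = moveToFront (σ s) (u s))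
include hσ

/-- Any letter ahead of `c` has been read since `c` was last read. -/
theorem exists_read_between_of_lt {c d : C} {t s : ℕ} (hc : u t = c) (hts : t < s)
    (hlt : σ s d < σ s c) : ∃ i, t < i ∧ i < s ∧ u i = d := by
  induction s, hts using Nat.le_induction with
  | base =>
    rw [hσ, ← hc, Fin.lt_def, val_moveToFront_self] at hlt
    omega
  | succ s hts ih =>
    by_cases hd : d = u s
    · exact ⟨s, hts, by omega, hd.symm⟩
    by_cases hcs : c = u s
    · rw [hσ, hcs, Fin.lt_def, val_moveToFront_self] at hlt
      omega
    rw [hσ, moveToFront_lt_moveToFront_iff hd hcs] at hlt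
    obtain ⟨i, hti, his, hi⟩ := ih hlt
    exact ⟨i, hti, by omega, hi⟩

theorem apply_eq_of_forall_le {c : C} {A j : ℕ} (hAj : A ≤ j)
    (hne : ∀ i, A ≤ i → i < j → u i ≠ c) (hle : ∀ i, A ≤ i → i < j → σ i (u i) ≤ σ A c) :
    σ j c = σ A c := by
  induction j, hAj using Nat.le_induction with
  | base => rfl
  | succ j hAj ih =>
    have hj := ih (fun i h₁ h₂ => hne i h₁ (by omega)) fun i h₁ h₂ => hle i h₁ (by omega)
    have hlt : σ j (u j) < σ j c := by
      rw [hj]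
      exact (hle j hAj (by omega)).lt_of_ne fun h =>
        hne j hAj (by omega) ((σ j).injective (h.trans hj.symm))
    rw [hσ, moveToFront_apply_of_lt hlt, hj]

variable {L : Finset C} (hev : ∀ᶠ s in atTop, u s ∈ L) (hinf : ∀ c ∈ L, ∃ᶠ s in atTop, u s = c)
include hev hinf

theorem eventually_val_lt_card_iff : ∀ᶠ s in atTop, ∀ c, (σ s c : ℕ) < L.card ↔ c ∈ L := by
  obtain ⟨T, hT⟩ := eventually_atTop.1 hev
  have hseen : ∀ᶠ s in atTop, ∀ c ∈ L, ∃ t, T ≤ t ∧ t < s ∧ u t = c := by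
    refine L.eventually_all.2 fun c hc => ?_
    obtain ⟨t, hTt, ht⟩ := frequently_atTop.1 (hinf c hc) T
    filter_upwards [eventually_gt_atTop t] with s hs using ⟨t, hTt, hs, ht⟩
  filter_upwards [hseen] with s hs
  have hfront : ∀ c ∈ L, (σ s c : ℕ) < L.card := by
    intro c hc
    obtain ⟨t, hTt, hts, ht⟩ := hs c hc
    refine val_lt_card_of_forall_le_mem (σ s) fun d hd => ?_
    rcases hd.lt_or_eq with hlt | heq
    · obtain ⟨i, hti, -, rfl⟩ := exists_read_between_of_lt hσ ht hts hlt
      exact hT i (by omega)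
    · rwa [(σ s).injective heq]
  exact fun c => ⟨mem_of_val_lt_card (σ s) hfront, hfront c⟩

theorem frequently_val_add_one_eq_card [Fintype C] :
    ∃ᶠ s in atTop, (σ s (u s) : ℕ) + 1 = L.card := by
  classical
  -- The letter at position `k - 1` stays there until it is next read, as all reads hit `< k`.
  obtain ⟨T, hT⟩ := eventually_atTop.1 (hev.and (eventually_val_lt_card_iff hσ hev hinf))
  refine frequently_atTop.2 fun A => ?_
  set A' := max A T
  have hA' := hT A' (le_max_right _ _)
  have hk₀ : 0 < L.card := Finset.card_pos.2 ⟨_, hA'.1⟩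
  have hk : L.card - 1 < n := by
    have := (Fintype.card_fin n ▸ Fintype.card_congr (σ 0)) ▸ L.card_le_univ
    omega
  set c := (σ A').symm ⟨L.card - 1, hk⟩
  have hcA' : (σ A' c : ℕ) = L.card - 1 := by simp [c]
  have hcL : c ∈ L := (hA'.2 c).1 (by omega)
  have hex : ∃ t, A' ≤ t ∧ u t = c := frequently_atTop.1 (hinf c hcL) A'
  obtain ⟨hA't, hut⟩ := Nat.find_spec hex
  refine ⟨Nat.find hex, le_trans (le_max_left _ _) hA't, ?_⟩
  have hstay := apply_eq_of_forall_le hσ hA't (fun i h₁ h₂ hi => Nat.find_min hex h₂ ⟨h₁, hi⟩)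
    fun i h₁ _ => by
      have hi := hT i (le_trans (le_max_right _ _) h₁)
      rw [Fin.le_def, hcA']
      have := (hi.2 (u i)).2 hi.1
      omega
  rw [hut, hstay, hcA']
  omega

end MoveToFrontRun

/-- A state is a recorded position together with the list of letters. -/
def step (q : Fin n × (C ≃ Fin n)) (a : C) : Fin n × (C ≃ Fin n) :=
  (q.2 a, moveToFront q.2 a)

def front (q : Fin n × (C ≃ Fin n)) : Set C :=
  {c | q.2 c ≤ q.1}

theorem front_eq {q : Fin n × (C ≃ Fin n)} {L : Finset C} (hq : (q.1 : ℕ) + 1 = L.card)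
    (h : ∀ c, (q.2 c : ℕ) < L.card ↔ c ∈ L) : front q = L := by
  ext c
  change q.2 c ≤ q.1 ↔ c ∈ L
  rw [Fin.le_def, ← h c]
  omega

section StateRun

variable {u : ℕ → C} {R : ℕ → Fin n × (C ≃ Fin n)} (hR : ∀ s, R (s + 1) = step (R s) (u s))
  {L : Finset C} (hev : ∀ᶠ s in atTop, u s ∈ L) (hinf : ∀ c ∈ L, ∃ᶠ s in atTop, u s = c)
include hR hev hinf

theorem eventually_hit_lt_card_and_val_lt_card_iff :
    ∀ᶠ s in atTop, ((R s).1 : ℕ) < L.card ∧ ∀ c, ((R s).2 c : ℕ) < L.card ↔ c ∈ L := by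
  have hσ : ∀ s, (R (s + 1)).2 = moveToFront (R s).2 (u s) := fun s => by rw [hR]; rfl
  have hfront := eventually_val_lt_card_iff (σ := fun s => (R s).2) hσ hev hinf
  rw [← map_add_atTop_eq_nat 1, eventually_map]
  filter_upwards [hev, hfront, (tendsto_add_atTop_nat 1).eventually hfront] with s hu hs hs₁
  refine ⟨?_, hs₁⟩
  rw [hR]
  exact (hs _).2 hu

theorem frequently_hit_add_one_eq_card [Fintype C] :
    ∃ᶠ s in atTop, ((R s).1 : ℕ) + 1 = L.card := by
  have hσ : ∀ s, (R (s + 1)).2 = moveToFront (R s).2 (u s) := fun s => by rw [hR]; rfl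
  refine (tendsto_add_atTop_nat 1).frequently ?_
  simpa only [hR, step] using frequently_val_add_one_eq_card (σ := fun s => (R s).2) hσ hev hinf

end StateRun

/-- The recorded position is the most significant digit of the state number. -/
noncomputable def stateEquiv (C : Type*) [Fintype C] [DecidableEq C] (n : ℕ) :
    Fin (n * Fintype.card (C ≃ Fin n)) ≃ Fin n × (C ≃ Fin n) :=
  finProdFinEquiv.symm.trans ((Equiv.refl _).prodCongr (Fintype.equivFin _).symm)

theorem stateEquiv_fst_monotone [Fintype C] [DecidableEq C] :
    Monotone fun q => (stateEquiv C n q).1 := fun q q' h => by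
  simpa [stateEquiv, Fin.le_def] using Nat.div_le_div_right h

theorem card_mul_card_equiv_le [Fintype C] [DecidableEq C] :
    Fintype.card C * Fintype.card (C ≃ Fin (Fintype.card C)) ≤
      Fintype.card C ^ (Fintype.card C + 1) := by
  rw [Fintype.card_equiv (Fintype.equivFin C), pow_succ']
  exact Nat.mul_le_mul_left _ (Nat.factorial_le_pow _)

end LastAppearanceRecord

open LastAppearanceRecord in
/-- The Last Appearance Record (LAR) memory lemma: for every finite (nonempty)
alphabet `C` there is a deterministic automaton, with a linearly ordered state
space `Fin N` of size at most `|C|^(|C|+1)`, such that for every infinite word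
`u`, the set of letters occurring infinitely often in `u` is determined, via a
fixed map `φ`, by the largest state occurring infinitely often in the run. -/
theorem stmt_2 (C : Type) [Fintype C] [Nonempty C] :
    ∃ (N : ℕ) (q₀ : Fin N) (δ : Fin N → C → Fin N) (φ : Fin N → Set C),
      N ≤ Fintype.card C ^ (Fintype.card C + 1) ∧
      ∀ (u : ℕ → C) (r : ℕ → Fin N),
        r 0 = q₀ → (∀ n : ℕ, r (n + 1) = δ (r n) (u n)) →
        ∀ m : Fin N, {n : ℕ | r n = m}.Infinite →
          (∀ q : Fin N, {n : ℕ | r n = q}.Infinite → q ≤ m) →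
          {c : C | {n : ℕ | u n = c}.Infinite} = φ m := by
  classical
  let e := stateEquiv C (Fintype.card C)
  refine ⟨_, e.symm (⟨0, Fintype.card_pos⟩, Fintype.equivFin C),
    fun q a => e.symm (step (e q) a), fun q => front (e q), card_mul_card_equiv_le, ?_⟩
  intro u r _ hr m hm hmax
  set L : Finset C := {c | ∃ᶠ s in atTop, u s = c}
  have hR : ∀ s, e (r (s + 1)) = step (e (r s)) (u s) := fun s => by
    rw [hr, e.apply_symm_apply]
  have hev : ∀ᶠ s in atTop, u s ∈ L := by
    simpa [L] using eventually_frequently_eq (l := atTop) u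
  have hinf : ∀ c ∈ L, ∃ᶠ s in atTop, u s = c := by simp [L]
  obtain ⟨q, hqm, hq⟩ := exists_le_of_frequently
    (fun q hq => hmax q (Nat.frequently_atTop_iff_infinite.1 hq))
    (P := fun q => ((e q).1 : ℕ) + 1 = L.card)
    (frequently_hit_add_one_eq_card (R := fun s => e (r s)) hR hev hinf)
  obtain ⟨s, rfl, hlt, hpos⟩ := ((Nat.frequently_atTop_iff_infinite.2 hm).and_eventually
    (eventually_hit_lt_card_and_val_lt_card_iff (R := fun s => e (r s)) hR hev hinf)).exists
  have hle : (e q).1 ≤ (e (r s)).1 := stateEquiv_fst_monotone hqm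
  rw [Fin.le_def] at hle
  change _ = front (e (r s))
  rw [front_eq (by omega) hpos]
  ext c
  simp [L, Nat.frequently_atTop_iff_infinite]
end

section
/- No regular tree is PUCE: if t : {0,1}^* → {a,b} is a tree whose set of subtrees { t_n : n ∈ {0,1}^* } is finite, then t is not positively ultimately constant everywhere, i.e. there exists a node n ∈ {0,1}^* such that either the set of branches visiting n along which only finitely many prefixes are labelled a by t has μ-measure 0, or the set of branches visiting n along which only finitely many prefixes are labelled b by t has μ-measure 0. -/
/-!
Write `Z s` for the density of all-`false` paths in a tree `s`: the infimum over `L` of the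
proportion of depth-`L` nodes whose path from the root is labelled `false` throughout. It is
defined combinatorially, so no shift-invariance of `μ` is needed, yet it bounds the measure of
the branches through a node `m` that are labelled `false` from `m` on by `2⁻¹ ^ |m| * Z (t_m)`,
and it satisfies `Z s ≤ (Z s₀ + Z s₁) / 2` when the root of `s` is labelled `false`.

If `t` were PUCE, some node `m₀` would carry positive measure of branches labelled `false` from
`m₀` on, so `Z` would be positive somewhere. Since `t` has finitely many subtrees, `Z` attains
its maximum `M > 0` at some `t_m`; the averaging inequality forces both children of a maximiser
to be maximisers, so every node below `m` has positive density and hence is labelled `false`.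
Then no branch through `m` has only finitely many `false` labels, contradicting PUCE at `m`.
-/

open MeasureTheory

open ENNReal

namespace LabelledTree

def subtree (t : List Bool → Bool) (n : List Bool) : List Bool → Bool := fun m => t (n ++ m)

@[simp] lemma subtree_nil_apply (t : List Bool → Bool) (n : List Bool) :
    subtree t n [] = t n := by
  simp [subtree]

lemma subtree_subtree (t : List Bool → Bool) (n v : List Bool) :
    subtree (subtree t n) v = subtree t (n ++ v) := by
  funext m; simp [subtree]

section Density

def falsePathCount (s : List Bool → Bool) : ℕ → ℕ
  | 0 => if s [] = true then 0 else 1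
  | L + 1 => if s [] = true then 0 else
      falsePathCount (subtree s [false]) L + falsePathCount (subtree s [true]) L

lemma falsePathCount_succ_le (L : ℕ) (s : List Bool → Bool) :
    falsePathCount s (L + 1) ≤ 2 * falsePathCount s L := by
  induction L generalizing s with
  | zero => simp only [falsePathCount]; split_ifs <;> omega
  | succ L ih =>
    have h₀ := ih (subtree s [false])
    have h₁ := ih (subtree s [true])
    rw [falsePathCount.eq_2 s (L + 1), falsePathCount.eq_2 s L]
    split_ifs <;> omega

lemma two_mul_inv_two : (2 : ℝ≥0∞) * 2⁻¹ = 1 :=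
  ENNReal.mul_inv_cancel two_ne_zero ofNat_ne_top

noncomputable def falseDensity (s : List Bool → Bool) : ℝ≥0∞ :=
  ⨅ L : ℕ, (falsePathCount s L : ℝ≥0∞) * 2⁻¹ ^ L

lemma antitone_falsePathCount_mul (s : List Bool → Bool) :
    Antitone fun L : ℕ => (falsePathCount s L : ℝ≥0∞) * 2⁻¹ ^ L := by
  refine antitone_nat_of_succ_le fun L => ?_
  calc (falsePathCount s (L + 1) : ℝ≥0∞) * 2⁻¹ ^ (L + 1)
      ≤ (2 * falsePathCount s L : ℕ) * 2⁻¹ ^ (L + 1) := by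
        gcongr; exact falsePathCount_succ_le L s
    _ = falsePathCount s L * 2⁻¹ ^ L * (2 * 2⁻¹) := by push_cast; ring
    _ = falsePathCount s L * 2⁻¹ ^ L := by rw [two_mul_inv_two, mul_one]

lemma falseDensity_le (s : List Bool → Bool) (L : ℕ) :
    falseDensity s ≤ falsePathCount s L * 2⁻¹ ^ L :=
  iInf_le _ L

lemma falseDensity_ne_top (s : List Bool → Bool) : falseDensity s ≠ ⊤ := by
  refine ne_top_of_le_ne_top ?_ (falseDensity_le s 0)
  simp only [falsePathCount]
  split_ifs <;> simp

lemma root_eq_false_of_falseDensity_ne_zero {s : List Bool → Bool} (h : falseDensity s ≠ 0) :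
    s [] = false := by
  by_contra hs
  refine h (le_antisymm ((falseDensity_le s 0).trans ?_) zero_le)
  simp [falsePathCount, hs]

lemma falseDensity_le_half_add {s : List Bool → Bool} (h : s [] = false) :
    falseDensity s ≤
      (falseDensity (subtree s [false]) + falseDensity (subtree s [true])) / 2 := by
  rw [ENNReal.le_div_iff_mul_le (Or.inl two_ne_zero) (Or.inl ofNat_ne_top)]
  refine ENNReal.le_iInf_add_iInf fun i j => ?_
  set k := max i j
  calc falseDensity s * 2
      ≤ falsePathCount s (k + 1) * 2⁻¹ ^ (k + 1) * 2 := by gcongr; exact falseDensity_le s _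
    _ = (falsePathCount (subtree s [false]) k * 2⁻¹ ^ k +
          falsePathCount (subtree s [true]) k * 2⁻¹ ^ k) * (2 * 2⁻¹) := by
        simp only [falsePathCount, h]; push_cast; ring
    _ ≤ falsePathCount (subtree s [false]) i * 2⁻¹ ^ i +
          falsePathCount (subtree s [true]) j * 2⁻¹ ^ j := by
        rw [two_mul_inv_two, mul_one]
        exact add_le_add (antitone_falsePathCount_mul _ (le_max_left i j))
          (antitone_falsePathCount_mul _ (le_max_right i j))

lemma eq_of_le_of_le_add_div_two {a b M : ℝ≥0∞} (hM : M ≠ ⊤) (ha : a ≤ M) (hb : b ≤ M)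
    (h : M ≤ (a + b) / 2) : a = M ∧ b = M := by
  rw [ENNReal.le_div_iff_mul_le (Or.inl two_ne_zero) (Or.inl ofNat_ne_top), mul_two] at h
  refine ⟨le_antisymm ha ?_, le_antisymm hb ?_⟩
  · exact (ENNReal.add_le_add_iff_right hM).1 (h.trans (add_le_add_right hb a))
  · exact (ENNReal.add_le_add_iff_left hM).1 (h.trans (add_le_add_left ha b))

lemma falseDensity_subtree_append_eq {t : List Bool → Bool} {M : ℝ≥0∞} (hM : M ≠ 0)
    (hmax : ∀ n, falseDensity (subtree t n) ≤ M) {m : List Bool}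
    (hm : falseDensity (subtree t m) = M) (u : List Bool) :
    falseDensity (subtree t (m ++ u)) = M := by
  induction u generalizing m with
  | nil => simpa using hm
  | cons c u ih =>
    have hroot : subtree t m [] = false :=
      root_eq_false_of_falseDensity_ne_zero (hm ▸ hM)
    have hchildren := eq_of_le_of_le_add_div_two (hm ▸ falseDensity_ne_top _)
      (hmax (m ++ [false])) (hmax (m ++ [true]))
      (by simpa only [hm, subtree_subtree] using falseDensity_le_half_add hroot)
    rw [show m ++ c :: u = m ++ [c] ++ u by simp]
    cases c
    · exact ih hchildren.1
    · exact ih hchildren.2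

end Density

section Branches

lemma mem_cylinder_iff {b : ℕ → Bool} {w : List Bool} :
    b ∈ cylinder w ↔ branchPrefix b w.length = w := by
  refine ⟨fun hb => List.ext_get (by simp [branchPrefix]) fun i _ hi => ?_, fun hb i => ?_⟩
  · simpa [branchPrefix] using hb ⟨i, hi⟩
  · simpa [branchPrefix] using List.getElem_of_eq hb (by simp [branchPrefix] : ↑i < _)

lemma branchPrefix_add (b : ℕ → Bool) (k j : ℕ) :
    branchPrefix b (k + j) = branchPrefix b k ++ List.ofFn fun i : Fin j => b (k + i) := by
  simp [branchPrefix, List.ofFn_add]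

@[simp] lemma length_branchPrefix (b : ℕ → Bool) (k : ℕ) : (branchPrefix b k).length = k := by
  simp [branchPrefix]

def falseBelow (t : List Bool → Bool) (m : List Bool) : Set (ℕ → Bool) :=
  {b | b ∈ cylinder m ∧ ∀ j, m.length ≤ j → t (branchPrefix b j) = false}

lemma falseBelow_eq_empty {t : List Bool → Bool} {m : List Bool} (h : t m = true) :
    falseBelow t m = ∅ := by
  refine Set.eq_empty_of_forall_notMem fun b hb => ?_
  have hm := hb.2 m.length le_rfl
  rw [mem_cylinder_iff.1 hb.1, h] at hm
  simp at hm

lemma falseBelow_subset_union (t : List Bool → Bool) (m : List Bool) :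
    falseBelow t m ⊆ falseBelow t (m ++ [false]) ∪ falseBelow t (m ++ [true]) := by
  rintro b ⟨hb, hfalse⟩
  have hchild : b ∈ falseBelow t (m ++ [b m.length]) := by
    refine ⟨mem_cylinder_iff.2 ?_, fun j hj => hfalse j ?_⟩
    · simpa [mem_cylinder_iff.1 hb] using branchPrefix_add b m.length 1
    · simp only [List.length_append, List.length_singleton] at hj; omega
  cases h : b m.length <;> rw [h] at hchild
  exacts [Or.inl hchild, Or.inr hchild]

lemma setOf_finite_true_subset_iUnion_falseBelow (t : List Bool → Bool) :
    {b | {k | t (branchPrefix b k) = true}.Finite} ⊆ ⋃ m, falseBelow t m := by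
  intro b hb
  obtain ⟨K, hK⟩ := hb.bddAbove
  refine Set.mem_iUnion.2 ⟨branchPrefix b (K + 1), mem_cylinder_iff.2 (by simp), fun j hj => ?_⟩
  rw [length_branchPrefix] at hj
  by_contra hj'
  have := hK (Bool.not_eq_false _ |>.mp hj')
  omega

lemma setOf_finite_false_eq_empty {t : List Bool → Bool} {m : List Bool}
    (h : ∀ u, t (m ++ u) = false) :
    {b | b ∈ cylinder m ∧ {k | t (branchPrefix b k) = false}.Finite} = ∅ := by
  refine Set.eq_empty_of_forall_notMem fun b ⟨hb, hfin⟩ =>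
    Set.Ici_infinite m.length (hfin.subset fun k hk => ?_)
  obtain ⟨j, rfl⟩ := Nat.exists_eq_add_of_le hk
  show t _ = false
  rw [branchPrefix_add, mem_cylinder_iff.1 hb]
  exact h _

end Branches

section Measure

variable {μ : Measure (ℕ → Bool)} (hcyl : ∀ w, μ (cylinder w) ≤ 2⁻¹ ^ w.length)
include hcyl

lemma measure_falseBelow_le (t : List Bool → Bool) (L : ℕ) (m : List Bool) :
    μ (falseBelow t m) ≤ falsePathCount (subtree t m) L * 2⁻¹ ^ (m.length + L) := by
  by_cases h : t m = true
  · simp [falseBelow_eq_empty h]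
  have hroot : subtree t m [] = false := by simpa using h
  cases L with
  | zero =>
    simp only [falsePathCount, hroot, Bool.false_eq_true, if_false, Nat.cast_one, one_mul,
      add_zero]
    exact (measure_mono fun b hb => hb.1).trans (hcyl m)
  | succ L =>
    calc μ (falseBelow t m)
        ≤ μ (falseBelow t (m ++ [false])) + μ (falseBelow t (m ++ [true])) :=
          (measure_mono (falseBelow_subset_union t m)).trans (measure_union_le _ _)
      _ ≤ falsePathCount (subtree t (m ++ [false])) L * 2⁻¹ ^ ((m ++ [false]).length + L) +
          falsePathCount (subtree t (m ++ [true])) L * 2⁻¹ ^ ((m ++ [true]).length + L) :=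
          add_le_add (measure_falseBelow_le t L _) (measure_falseBelow_le t L _)
      _ = falsePathCount (subtree t m) (L + 1) * 2⁻¹ ^ (m.length + (L + 1)) := by
          simp only [falsePathCount, hroot, Bool.false_eq_true, if_false, subtree_subtree,
            List.length_append, List.length_singleton]
          push_cast
          ring

lemma falseDensity_subtree_ne_zero {t : List Bool → Bool} {m : List Bool}
    (h : μ (falseBelow t m) ≠ 0) : falseDensity (subtree t m) ≠ 0 := by
  refine fun h0 => h (le_antisymm ?_ zero_le)
  rw [← h0]
  refine le_iInf fun L => (measure_falseBelow_le hcyl t L m).trans ?_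
  exact mul_le_mul_right (pow_le_pow_right_of_le_one' (ENNReal.inv_le_one.2 one_le_two)
    (Nat.le_add_left L _)) _

end Measure

end LabelledTree

open LabelledTree

/-- The letter `a` is encoded as `true` and `b` as `false`. -/
theorem stmt_3 (μ : Measure (ℕ → Bool)) (hμ : IsUniformBernoulli μ)
    (t : List Bool → Bool)
    (hreg : {s : List Bool → Bool | ∃ n : List Bool, s = fun m => t (n ++ m)}.Finite) :
    ∃ n : List Bool,
      μ {b | b ∈ cylinder n ∧ {k : ℕ | t (branchPrefix b k) = true}.Finite} = 0 ∨
      μ {b | b ∈ cylinder n ∧ {k : ℕ | t (branchPrefix b k) = false}.Finite} = 0 := by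
  by_contra! hcon
  have hcyl : ∀ w, μ (cylinder w) ≤ 2⁻¹ ^ w.length := fun w => (hμ.2 w).le
  obtain ⟨m₀, hm₀⟩ : ∃ m, μ (falseBelow t m) ≠ 0 := by
    by_contra! hnull
    exact (hcon []).1 (measure_mono_null
      (fun b hb => setOf_finite_true_subset_iUnion_falseBelow t hb.2) (measure_iUnion_null hnull))
  obtain ⟨_, ⟨m, rfl⟩, hmax⟩ := Set.exists_max_image _ falseDensity hreg ⟨t, [], rfl⟩
  have hmax' : ∀ n, falseDensity (subtree t n) ≤ falseDensity (subtree t m) :=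
    fun n => hmax _ ⟨n, rfl⟩
  have hpos : falseDensity (subtree t m) ≠ 0 := fun h0 =>
    falseDensity_subtree_ne_zero hcyl hm₀ (le_zero_iff.1 (h0 ▸ hmax' m₀))
  have hlabels : ∀ u, t (m ++ u) = false := fun u => by
    rw [← subtree_nil_apply t]
    exact root_eq_false_of_falseDensity_ne_zero
      (by rwa [falseDensity_subtree_append_eq hpos hmax' rfl u])
  exact (hcon m).2 (by rw [setOf_finite_false_eq_empty hlabels, measure_empty])
end

section
/- There exists a tree t : {0,1}^* → {a,b} which is positively ultimately constant everywhere (PUCE): for every node n ∈ {0,1}^*, the set of branches visiting n along which only finitely many prefixes are labelled a by t has positive μ-measure, and the set of branches visiting n along which only finitely many prefixes are labelled b by t has positive μ-measure. -/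
open MeasureTheory

/-!
Cut `ℕ` into consecutive blocks `[blockStart j, blockStart (j + 1))`, each one two positions
longer than everything before it, and label a node by the value of the last complete block on
which it is constant. Given a node `n` of length `j₀` and a bit `u`, extend `n` by `u`s up to
the end `K` of block `j₀`: this gives a cylinder of measure `2⁻¹ ^ K`, while by the union bound
the branches with some later block constantly `!u` have measure at most `2⁻¹ ^ (K + 1)`. All
other branches of the cylinder are eventually labelled `u`.
-/

lemma mem_cylinder_iff {w : List Bool} {b : ℕ → Bool} :
    b ∈ cylinder w ↔ ∀ i (hi : i < w.length), b i = w[i] :=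
  ⟨fun h i hi => h ⟨i, hi⟩, fun h i => h i i.2⟩

lemma branchPrefix_getD (b : ℕ → Bool) {k i : ℕ} (d : Bool) (h : i < k) :
    (branchPrefix b k).getD i d = b i := by
  simp [branchPrefix, h]

lemma measure_forall_Ico_eq_le {μ : Measure (ℕ → Bool)} (hμ : IsUniformBernoulli μ)
    (s l : ℕ) (u : Bool) :
    μ {b | ∀ i ∈ Finset.Ico s (s + l), b i = u} ≤ (2 : ENNReal)⁻¹ ^ l := by
  have hcover : {b : ℕ → Bool | ∀ i ∈ Finset.Ico s (s + l), b i = u} ⊆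
      ⋃ f : Fin s → Bool, cylinder (List.ofFn f ++ List.replicate l u) := by
    intro b hb
    refine Set.mem_iUnion.2 ⟨fun i => b i, mem_cylinder_iff.2 fun i hi => ?_⟩
    simp only [List.length_append, List.length_ofFn, List.length_replicate] at hi
    by_cases his : i < s
    · simp [List.getElem_append_left, his]
    · rw [List.getElem_append_right (by simpa using his), List.getElem_replicate]
      exact hb i (Finset.mem_Ico.2 ⟨by omega, hi⟩)
  calc μ _ ≤ ∑ f : Fin s → Bool, μ (cylinder (List.ofFn f ++ List.replicate l u)) :=
        (measure_mono hcover).trans ((measure_iUnion_le _).trans_eq (tsum_fintype _))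
    _ = 2 ^ s * ((2 : ENNReal)⁻¹ ^ s * (2 : ENNReal)⁻¹ ^ l) := by
        simp [hμ.2, pow_add]
    _ = (2 : ENNReal)⁻¹ ^ l := by
        rw [← mul_assoc, ← mul_pow, ENNReal.mul_inv_cancel two_ne_zero ENNReal.ofNat_ne_top,
          one_pow, one_mul]

def blockStart : ℕ → ℕ
  | 0 => 0
  | j + 1 => 2 * blockStart j + 2

lemma blockStart_strictMono : StrictMono blockStart :=
  strictMono_nat_of_lt_succ fun j => by simp only [blockStart]; omega

lemma le_blockStart (j : ℕ) : j ≤ blockStart j :=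
  blockStart_strictMono.le_apply

def IsMonoBlock (b : ℕ → Bool) (j : ℕ) (u : Bool) : Prop :=
  ∀ i ∈ Finset.Ico (blockStart j) (blockStart (j + 1)), b i = u

instance (b : ℕ → Bool) (j : ℕ) (u : Bool) : Decidable (IsMonoBlock b j u) := by
  unfold IsMonoBlock; infer_instance

def lastConstBlock (b : ℕ → Bool) (k : ℕ) : ℕ :=
  Nat.findGreatest (fun j => blockStart (j + 1) ≤ k ∧ IsMonoBlock b j (b (blockStart j))) k

def blockLabel (b : ℕ → Bool) (k : ℕ) : Bool :=
  b (blockStart (lastConstBlock b k))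

def puceTree (w : List Bool) : Bool :=
  blockLabel (fun i => w.getD i true) w.length

lemma blockLabel_congr {b c : ℕ → Bool} {k : ℕ} (hk : 0 < k) (hbc : ∀ i < k, b i = c i) :
    blockLabel b k = blockLabel c k := by
  have hblock : ∀ j, blockStart (j + 1) ≤ k →
      (IsMonoBlock b j (b (blockStart j)) ↔ IsMonoBlock c j (c (blockStart j))) := by
    intro j hj
    have hstart : blockStart j < k := (blockStart_strictMono (Nat.lt_succ_self j)).trans_le hj
    simp only [IsMonoBlock, Finset.mem_Ico, hbc _ hstart]
    exact forall₂_congr fun i hi => by rw [hbc i (by omega)]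
  have hlast : lastConstBlock b k = lastConstBlock c k := by
    unfold lastConstBlock
    congr 1
    ext j
    exact and_congr_right (hblock j)
  unfold blockLabel
  rw [← hlast]
  apply hbc
  rcases eq_or_ne (lastConstBlock b k) 0 with h0 | hne
  · simpa [h0, blockStart] using hk
  · have hspec := Nat.findGreatest_of_ne_zero rfl hne
    exact (blockStart_strictMono (Nat.lt_succ_self _)).trans_le hspec.1

lemma puceTree_branchPrefix (b : ℕ → Bool) {k : ℕ} (hk : 0 < k) :
    puceTree (branchPrefix b k) = blockLabel b k := by
  unfold puceTree
  rw [show (branchPrefix b k).length = k by simp [branchPrefix]]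
  exact blockLabel_congr hk fun i hi => branchPrefix_getD b true hi

lemma le_lastConstBlock_and_isMonoBlock {b : ℕ → Bool} {j₀ k : ℕ}
    (hk : blockStart (j₀ + 1) ≤ k) (hj₀ : IsMonoBlock b j₀ (b (blockStart j₀))) :
    j₀ ≤ lastConstBlock b k ∧
      IsMonoBlock b (lastConstBlock b k) (b (blockStart (lastConstBlock b k))) := by
  have hj₀k : j₀ ≤ k := (Nat.le_succ j₀).trans ((le_blockStart _).trans hk)
  exact ⟨Nat.le_findGreatest hj₀k ⟨hk, hj₀⟩, (Nat.findGreatest_spec hj₀k (P := fun j =>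
    blockStart (j + 1) ≤ k ∧ IsMonoBlock b j (b (blockStart j))) ⟨hk, hj₀⟩).2⟩

lemma blockLabel_eq_of_isMonoBlock {b : ℕ → Bool} {j₀ k : ℕ} {u : Bool}
    (hmono : IsMonoBlock b j₀ u) (hlater : ∀ j, j₀ < j → ¬IsMonoBlock b j (!u))
    (hk : blockStart (j₀ + 1) ≤ k) : blockLabel b k = u := by
  have hstart : b (blockStart j₀) = u :=
    hmono _ (Finset.mem_Ico.2 ⟨le_rfl, blockStart_strictMono (Nat.lt_succ_self j₀)⟩)
  obtain ⟨hle, hlast⟩ := le_lastConstBlock_and_isMonoBlock hk (hstart ▸ hmono)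
  unfold blockLabel
  by_contra hne
  rw [Bool.eq_not_of_ne hne] at hlast
  rcases hle.lt_or_eq with hlt | heq
  · exact hlater _ hlt hlast
  · exact hne (heq ▸ hstart)

lemma cylinder_append_replicate_subset (n : List Bool) (l : ℕ) (u : Bool) :
    cylinder (n ++ List.replicate l u) ⊆
      cylinder n ∩ {b | ∀ i ∈ Finset.Ico n.length (n.length + l), b i = u} := by
  intro b hb
  rw [mem_cylinder_iff] at hb
  refine ⟨mem_cylinder_iff.2 fun i hi => ?_, fun i hi => ?_⟩
  · rw [hb i (by simp; omega), List.getElem_append_left hi]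
  · rw [Finset.mem_Ico] at hi
    rw [hb i (by simp; omega), List.getElem_append_right (by omega), List.getElem_replicate]

lemma measure_isMonoBlock_le {μ : Measure (ℕ → Bool)} (hμ : IsUniformBernoulli μ)
    (j : ℕ) (u : Bool) :
    μ {b | IsMonoBlock b j u} ≤ (2 : ENNReal)⁻¹ ^ (blockStart j + 2) := by
  have hend : blockStart (j + 1) = blockStart j + (blockStart j + 2) := by
    simp only [blockStart]; ring
  simpa only [IsMonoBlock, hend] using measure_forall_Ico_eq_le hμ (blockStart j) _ u

lemma measure_exists_isMonoBlock_gt_le {μ : Measure (ℕ → Bool)}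
    (hμ : IsUniformBernoulli μ) (j₀ : ℕ) (u : Bool) :
    μ {b | ∃ j, j₀ < j ∧ IsMonoBlock b j u} ≤ (2 : ENNReal)⁻¹ ^ (blockStart (j₀ + 1) + 1) := by
  set K := blockStart (j₀ + 1)
  have hcover : {b | ∃ j, j₀ < j ∧ IsMonoBlock b j u} ⊆
      ⋃ m, {b | IsMonoBlock b (m + (j₀ + 1)) u} := by
    rintro b ⟨j, hj, hb⟩
    exact Set.mem_iUnion.2 ⟨j - (j₀ + 1), by rwa [Nat.sub_add_cancel hj]⟩
  -- block `m + (j₀ + 1)` has length at least `K + 2 + m`: the union bound is a geometric series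
  have hterm : ∀ m,
      μ {b | IsMonoBlock b (m + (j₀ + 1)) u} ≤ (2 : ENNReal)⁻¹ ^ (K + 2) * 2⁻¹ ^ m :=
    fun m => (measure_isMonoBlock_le hμ _ u).trans <| by
      rw [← pow_add]
      exact pow_le_pow_right_of_le_one' (ENNReal.inv_le_one.2 one_le_two)
        (by have := blockStart_strictMono.add_le_nat m (j₀ + 1); omega)
  calc μ _ ≤ ∑' m, (2 : ENNReal)⁻¹ ^ (K + 2) * 2⁻¹ ^ m :=
        (measure_mono hcover).trans ((measure_iUnion_le _).trans (ENNReal.tsum_le_tsum hterm))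
    _ = (2 : ENNReal)⁻¹ ^ (K + 1) := by
        rw [ENNReal.tsum_mul_left, ENNReal.tsum_geometric, ENNReal.one_sub_inv_two, inv_inv,
          pow_succ _ (K + 1), mul_assoc, ENNReal.inv_mul_cancel two_ne_zero ENNReal.ofNat_ne_top,
          mul_one]

theorem measure_eventually_const_pos {μ : Measure (ℕ → Bool)}
    (hμ : IsUniformBernoulli μ) (n : List Bool) (u : Bool) :
    0 < μ {b | b ∈ cylinder n ∧ {k : ℕ | puceTree (branchPrefix b k) = !u}.Finite} := by
  set j₀ := n.length
  set K := blockStart (j₀ + 1)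
  have hstart₀ : j₀ ≤ blockStart j₀ ∧ blockStart j₀ < K :=
    ⟨le_blockStart j₀, blockStart_strictMono (Nat.lt_succ_self j₀)⟩
  set w := n ++ List.replicate (K - j₀) u
  set bad := {b | ∃ j, j₀ < j ∧ IsMonoBlock b j (!u)}
  have hgood : cylinder w \ bad ⊆
      {b | b ∈ cylinder n ∧ {k : ℕ | puceTree (branchPrefix b k) = !u}.Finite} := by
    rintro b ⟨hbw, hbad⟩
    obtain ⟨hbn, hbu⟩ := cylinder_append_replicate_subset n _ u hbw
    have hmono : IsMonoBlock b j₀ u := fun i hi =>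
      hbu i (by simp only [Finset.mem_Ico] at hi ⊢; omega)
    have hlater : ∀ j, j₀ < j → ¬IsMonoBlock b j (!u) := fun j hj hb => hbad ⟨j, hj, hb⟩
    refine ⟨hbn, (Set.finite_Iio K).subset fun k hk => ?_⟩
    by_contra hKk
    rw [Set.mem_Iio, not_lt] at hKk
    have hlabel := blockLabel_eq_of_isMonoBlock hmono hlater hKk
    rw [Set.mem_ofPred_eq, puceTree_branchPrefix b (by omega), hlabel] at hk
    cases u <;> simp at hk
  have hw : μ (cylinder w) = (2 : ENNReal)⁻¹ ^ K := by
    rw [hμ.2]; congr 1; simp only [w, List.length_append, List.length_replicate]; omega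
  have hbad : μ bad < μ (cylinder w) := by
    refine (measure_exists_isMonoBlock_gt_le hμ j₀ (!u)).trans_lt ?_
    rw [hw, pow_succ, ← div_eq_mul_inv]
    exact ENNReal.half_lt_self (by simp) (by simp)
  calc 0 < μ (cylinder w) - μ bad := tsub_pos_of_lt hbad
    _ ≤ μ (cylinder w \ bad) := le_measure_sdiff
    _ ≤ _ := measure_mono hgood

/-- There exists a PUCE tree over the two-letter alphabet `{a, b}` (encoded as
`Bool`, `true` playing the role of `a` and `false` the role of `b`): for every
node, the branches through that node with finitely many `a`-labelled prefixes
have positive measure, and likewise for `b`. -/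
theorem stmt_4 (μ : Measure (ℕ → Bool)) (hμ : IsUniformBernoulli μ) :
    ∃ t : List Bool → Bool, ∀ n : List Bool,
      0 < μ {b | b ∈ cylinder n ∧ {k : ℕ | t (branchPrefix b k) = true}.Finite} ∧
      0 < μ {b | b ∈ cylinder n ∧ {k : ℕ | t (branchPrefix b k) = false}.Finite} :=
  ⟨puceTree, fun n =>
    ⟨measure_eventually_const_pos hμ n false, measure_eventually_const_pos hμ n true⟩⟩
end

section
/- There exists a set H ⊆ {0,1}^* of nodes such that: (a) the set of branches in {0,1}^ℕ visiting no node of H has μ-measure exactly 1/2; (b) H is an antichain for the prefix order, i.e. no node of H is a strict prefix of another node of H; and (c) every node of {0,1}^* is either an ancestor (a prefix) or a descendant (an extension) of some node of H. -/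
open MeasureTheory

namespace Stmt5

/-- enumeration of all binary words -/
noncomputable def e (k : ℕ) : List Bool := (Encodable.decode (α := List Bool) k).getD []

lemma e_surj (v : List Bool) : e (Encodable.encode v) = v := by
  simp [e]

open Classical in
/-- one step of the greedy construction -/
noncomputable def step (k : ℕ) (prev : List (List Bool)) : List Bool :=
  if (e k.unpair.1).length ≤ k ∧ ∀ d ∈ prev, ¬ d <+: e k.unpair.1 ∧ ¬ e k.unpair.1 <+: d
  then e k.unpair.1 ++ ([true] ++ (List.replicate (k - (e k.unpair.1).length) false ++ [true]))
  else List.replicate (k+1) false ++ [true]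

noncomputable def DL : ℕ → List (List Bool)
  | 0 => []
  | k+1 => DL k ++ [step k (DL k)]

noncomputable def D (k : ℕ) : List Bool := step k (DL k)

lemma mem_DL {d : List Bool} {k : ℕ} : d ∈ DL k ↔ ∃ j < k, D j = d := by
  induction k with
  | zero => simp [DL]
  | succ k ih =>
    simp only [DL, List.mem_append, List.mem_singleton, ih]
    constructor
    · rintro (⟨j, hj, rfl⟩ | rfl)
      · exact ⟨j, by omega, rfl⟩
      · exact ⟨k, by omega, rfl⟩
    · rintro ⟨j, hj, rfl⟩
      rcases Nat.lt_succ_iff_lt_or_eq.mp hj with h | rfl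
      · exact Or.inl ⟨j, h, rfl⟩
      · exact Or.inr rfl

lemma length_D (k : ℕ) : (D k).length = k + 2 := by
  unfold D step
  split_ifs with h
  · simp only [List.length_append, List.length_replicate, List.length_singleton]
    omega
  · simp

lemma true_mem_D (k : ℕ) : true ∈ D k := by
  unfold D step
  split_ifs with h <;> simp

lemma not_prefix_D {j k : ℕ} (hjk : j < k) : ¬ D j <+: D k := by
  intro hpre
  have hlen : (D j).length = j + 2 := length_D j
  conv at hpre in D k => rw [D]
  unfold step at hpre
  split_ifs at hpre with h
  · -- coverage branch
    obtain ⟨hle, hall⟩ := h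
    have hmem : D j ∈ DL k := mem_DL.mpr ⟨j, hjk, rfl⟩
    have hd := hall (D j) hmem
    set w := e k.unpair.1 with hw
    have hwpre : w <+: w ++ ([true] ++ (List.replicate (k - w.length) false ++ [true])) :=
      List.prefix_append _ _
    rcases le_total (D j).length w.length with hle2 | hle2
    · exact hd.1 (List.prefix_of_prefix_length_le hpre hwpre hle2)
    · exact hd.2 (List.prefix_of_prefix_length_le hwpre hpre hle2)
  · -- reservoir branch
    have : D j <+: List.replicate (k+1) false := by
      have h1 : D j = (List.replicate (k+1) false ++ [true]).take (D j).length :=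
        List.prefix_iff_eq_take.mp hpre
      rw [List.take_append_of_le_length (by simp; omega)] at h1
      rw [h1, List.take_replicate]
      exact ⟨List.replicate ((k+1) - min (j+2) (k+1)) false, by
        rw [← List.replicate_add]; congr 1; omega⟩
    have := this.subset (true_mem_D j)
    simp at this

lemma antichain_D {m n : ℕ} (h : D m <+: D n) : D m = D n := by
  rcases lt_trichotomy m n with hmn | rfl | hmn
  · exact absurd h (not_prefix_D hmn)
  · rfl
  · exfalso
    have := h.length_le
    rw [length_D, length_D] at this
    omega

lemma coverage (v : List Bool) : ∃ k, D k <+: v ∨ v <+: D k := by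
  classical
  set a := Encodable.encode v with ha
  set k := Nat.pair a v.length with hk
  have hunp : k.unpair.1 = a := by rw [hk, Nat.unpair_pair]
  have hev : e k.unpair.1 = v := by rw [hunp, ha, e_surj]
  by_cases hc : (e k.unpair.1).length ≤ k ∧
      ∀ d ∈ DL k, ¬ d <+: e k.unpair.1 ∧ ¬ e k.unpair.1 <+: d
  · refine ⟨k, Or.inr ?_⟩
    rw [D, step, if_pos hc, hev]
    exact List.prefix_append _ _
  · rw [Decidable.not_and_iff_or_not] at hc
    rcases hc with hc | hc
    · exfalso
      rw [hev] at hc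
      exact hc (le_trans (Nat.right_le_pair a v.length) (le_of_eq rfl))
    · push_neg at hc
      obtain ⟨d, hd, hcmp⟩ := hc
      obtain ⟨j, _, rfl⟩ := mem_DL.mp hd
      rw [hev] at hcmp
      by_cases hp : Stmt5.D j <+: v
      · exact ⟨j, Or.inl hp⟩
      · exact ⟨j, Or.inr (hcmp hp)⟩

lemma cylinder_measurable (w : List Bool) : MeasurableSet (_root_.cylinder w) := by
  have h1 : _root_.cylinder w = ⋂ i : Fin w.length, {b : ℕ → Bool | b i = w.get i} := by
    ext b
    simp only [_root_.cylinder, Set.mem_setOf_eq, Set.mem_iInter]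
  rw [h1]
  refine MeasurableSet.iInter fun i => ?_
  have h2 : {b : ℕ → Bool | b i = w.get i}
      = (fun b : ℕ → Bool => b (i : ℕ)) ⁻¹' {w.get i} := rfl
  rw [h2]
  exact measurable_pi_apply (i : ℕ) (measurableSet_singleton (w.get i))

lemma prefix_of_mem_cylinders {u v : List Bool} {b : ℕ → Bool}
    (hu : b ∈ _root_.cylinder u) (hv : b ∈ _root_.cylinder v) (hle : u.length ≤ v.length) :
    u <+: v := by
  have heq : u = v.take u.length := by
    apply List.ext_getElem
    · simp [Nat.min_eq_left hle]
    · intro i h1 h2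
      have hiu : i < u.length := h1
      have hiv : i < v.length := lt_of_lt_of_le hiu hle
      have h3 := hu ⟨i, hiu⟩
      have h4 := hv ⟨i, hiv⟩
      simp only [List.get_eq_getElem] at h3 h4
      simp only [List.getElem_take]
      rw [← h3, ← h4]
  rw [heq]
  exact List.take_prefix _ _

lemma disjoint_cylinders {m n : ℕ} (h : m ≠ n) :
    Disjoint (cylinder (D m)) (cylinder (D n)) := by
  rw [Set.disjoint_left]
  intro b hm hn
  wlog hmn : m < n generalizing m n
  · exact this h.symm hn hm (by omega)
  have hle : (D m).length ≤ (D n).length := by rw [length_D, length_D]; omega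
  exact not_prefix_D hmn (prefix_of_mem_cylinders hm hn hle)

end Stmt5

/-- There is a set `H` of nodes such that (a) the branches avoiding `H` have
measure exactly `1/2`, (b) `H` is an antichain for the prefix order (a cut), and
(c) every node is an ancestor or a descendant of some node of `H`. -/
theorem stmt_5 (μ : Measure (ℕ → Bool)) (hμ : IsUniformBernoulli μ) :
    ∃ H : Set (List Bool),
      μ {b | ∀ n ∈ H, b ∉ cylinder n} = (2 : ENNReal)⁻¹ ∧
      (∀ n ∈ H, ∀ m ∈ H, n <+: m → n = m) ∧
      (∀ n : List Bool, ∃ h ∈ H, n <+: h ∨ h <+: n) := by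
  obtain ⟨hprob, hcyl⟩ := hμ
  haveI := hprob
  refine ⟨Set.range Stmt5.D, ?_, ?_, ?_⟩
  · have hset : {b : ℕ → Bool | ∀ n ∈ Set.range Stmt5.D, b ∉ cylinder n}
        = (⋃ k, cylinder (Stmt5.D k))ᶜ := by
      ext b
      simp [Set.mem_iUnion]
    rw [hset]
    have hmeas : MeasurableSet (⋃ k, cylinder (Stmt5.D k)) :=
      MeasurableSet.iUnion fun k => Stmt5.cylinder_measurable _
    have hunion : μ (⋃ k, cylinder (Stmt5.D k)) = 2⁻¹ := by
      rw [measure_iUnion (fun m n h => Stmt5.disjoint_cylinders h)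
        (fun k => Stmt5.cylinder_measurable _)]
      have : ∀ k, μ (cylinder (Stmt5.D k)) = (2 : ENNReal)⁻¹ ^ (k + 2) := by
        intro k
        rw [hcyl, Stmt5.length_D]
      rw [tsum_congr this]
      have : ∑' k : ℕ, (2 : ENNReal)⁻¹ ^ (k + 2)
          = (∑' k : ℕ, (2 : ENNReal)⁻¹ ^ k) * (2 : ENNReal)⁻¹ ^ 2 := by
        rw [← ENNReal.tsum_mul_right]
        congr 1
        ext k
        rw [pow_add]
      rw [this, ENNReal.tsum_geometric, ENNReal.one_sub_inv_two, pow_two,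
        inv_inv, ← mul_assoc,
        ENNReal.mul_inv_cancel two_ne_zero ENNReal.ofNat_ne_top, one_mul]
    rw [measure_compl hmeas (by finiteness), hunion, measure_univ,
      ENNReal.one_sub_inv_two]
  · rintro n ⟨j, rfl⟩ m ⟨i, rfl⟩ hpre
    exact Stmt5.antichain_D hpre
  · intro n
    obtain ⟨k, hk⟩ := Stmt5.coverage n
    exact ⟨Stmt5.D k, Set.mem_range_self k, hk.symm.imp id id⟩
end

section
/- Let t : {0,1}^* → {a,b} be a tree whose set of subtrees S = { t_n : n ∈ {0,1}^* } is finite, and suppose that no node roots a constant subtree, i.e. for every node n there exist descendants m and m' of n with t(m) = a and t(m') = b. Then every node n has a strict descendant n' with |n'| ≤ |n| + |S| and t(n') ≠ t(n). -/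
/-- Pumping for regular trees over the two-letter alphabet `{a, b}` (encoded as
`Bool`): if the set `S` of subtrees of `t` is finite and no node roots a constant
subtree, then every node `n` has a strict descendant `n'` of depth at most
`|n| + |S|` carrying the other label. -/
theorem stmt_6 (t : List Bool → Bool)
    (hS : {s : List Bool → Bool | ∃ n : List Bool, s = fun m => t (n ++ m)}.Finite)
    (hnc : ∀ n : List Bool, ∃ m m' : List Bool,
      n <+: m ∧ n <+: m' ∧ t m = true ∧ t m' = false) :
    ∀ n : List Bool, ∃ n' : List Bool,
      n <+: n' ∧ n' ≠ n ∧
      n'.length ≤ n.length +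
        {s : List Bool → Bool | ∃ k : List Bool, s = fun m => t (k ++ m)}.ncard ∧
      t n' ≠ t n := by
  classical
  intro n
  have hex : ∃ l, ∃ m : List Bool, m.length = l ∧ n <+: m ∧ t m ≠ t n := by
    obtain ⟨m, m', h1, h2, h3, h4⟩ := hnc n
    cases hb : t n
    · exact ⟨m.length, m, rfl, h1, by simp [h3]⟩
    · exact ⟨m'.length, m', rfl, h2, by simp [h4]⟩
  obtain ⟨m, hmL, hpre, hne⟩ := Nat.find_spec hex
  obtain ⟨s, hs⟩ := hpre
  set k := {s : List Bool → Bool | ∃ k : List Bool, s = fun m => t (k ++ m)}.ncard with hk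
  refine ⟨m, ⟨s, hs⟩, ?_, ?_, hne⟩
  · rintro rfl; exact hne rfl
  · by_contra hlen
    push_neg at hlen
    have hmlen : m.length = n.length + s.length := by rw [← hs]; simp
    have hsk : k < s.length := by omega
    have hcard : (hS.toFinset).card = k := by
      exact (Set.ncard_eq_toFinset_card _ hS).symm
    have key : ∀ i j : Fin (k+1), i < j →
        (fun u => t (n ++ s.take i.val ++ u)) = (fun u => t (n ++ s.take j.val ++ u)) →
        False := by
      intro i j hlt heq
      have hj : j.val ≤ s.length := by omega
      have h1 : t (n ++ s.take i.val ++ s.drop j.val) = t m := by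
        have := congrFun heq (s.drop j.val)
        rw [this, List.append_assoc, List.take_append_drop, hs]
      have h2 : (n ++ s.take i.val ++ s.drop j.val).length < Nat.find hex := by
        simp only [List.length_append, List.length_take, List.length_drop]
        omega
      exact Nat.find_min hex h2 ⟨n ++ s.take i.val ++ s.drop j.val, rfl,
        ⟨s.take i.val ++ s.drop j.val, by rw [List.append_assoc]⟩,
        by rw [h1]; exact hne⟩
    have hmap : ∀ i : Fin (k+1), i ∈ (Finset.univ : Finset (Fin (k+1))) →
        (fun u => t (n ++ s.take i.val ++ u)) ∈ hS.toFinset := by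
      intro i _
      simp only [Set.Finite.mem_toFinset, Set.mem_setOf_eq]
      exact ⟨n ++ s.take i.val, by funext u; rw [List.append_assoc]⟩
    obtain ⟨i, _, j, _, hij, hgij⟩ :=
      Finset.exists_ne_map_eq_of_card_lt_of_maps_to (by simp [hcard]) hmap
    rcases hij.lt_or_gt with h | h
    · exact key i j h hgij
    · exact key j i h hgij.symm
end

section
/- Let σ₁ and σ₂ be two almost-sure policies with domains W₁ and W₂ respectively (for the same data Q, ≤, F_1, F_{>0}, Δ). Then there exists an almost-sure policy with domain W₁ ∪ W₂; in fact the policy σ₃ defined by σ₃(w) = σ₁(w) if w ∈ W₁ and σ₃(w) = σ₂(w) otherwise is almost-sure with domain W₁ ∪ W₂. -/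
/-- A policy with domain `W`: a choice, for each state of `W`, of a transition of
`Δ` whose two targets stay in `W`. (The values of `σ` outside `W` are irrelevant.) -/
def IsPolicy {Q : Type} (Δ : Set (Q × Q × Q)) (W : Finset Q) (σ : Q → Q × Q) : Prop :=
  ∀ q ∈ W, (q, (σ q).1, (σ q).2) ∈ Δ ∧ (σ q).1 ∈ W ∧ (σ q).2 ∈ W

/-- An ergodic class of the policy `σ` with domain `W`: a minimal nonempty subset
of `W` closed under both components of `σ`. -/
def IsErgodicClass {Q : Type} (W : Finset Q) (σ : Q → Q × Q) (C : Set Q) : Prop :=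
  C.Nonempty ∧ C ⊆ (W : Set Q) ∧ (∀ q ∈ C, (σ q).1 ∈ C ∧ (σ q).2 ∈ C) ∧
    ∀ C' : Set Q, C' ⊆ C → C'.Nonempty →
      (∀ q ∈ C', (σ q).1 ∈ C' ∧ (σ q).2 ∈ C') → C' = C

/-- An almost-sure policy: the maximum of every ergodic class is in `F1`, and from
every state of `F_{>0} ∩ W` there is a path of the induced Markov chain staying in
`F_{>0} ∩ W` and reaching an ergodic class contained in `F_{>0}`. -/
def IsAlmostSurePolicy {Q : Type} [LinearOrder Q] (F1 F0 : Set Q)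
    (Δ : Set (Q × Q × Q)) (W : Finset Q) (σ : Q → Q × Q) : Prop :=
  IsPolicy Δ W σ ∧
  (∀ C : Set Q, IsErgodicClass W σ C → ∃ m ∈ C, (∀ q ∈ C, q ≤ m) ∧ m ∈ F1) ∧
  (∀ q, q ∈ W → q ∈ F0 → ∃ (k : ℕ) (p : ℕ → Q), p 0 = q ∧
    (∀ i < k, p (i + 1) = (σ (p i)).1 ∨ p (i + 1) = (σ (p i)).2) ∧
    (∀ i ≤ k, p i ∈ F0 ∧ p i ∈ W) ∧
    ∃ C : Set Q, IsErgodicClass W σ C ∧ C ⊆ F0 ∧ p k ∈ C)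

/-- Concatenation of two paths. -/
lemma path_concat {Q : Type} (τ : Q → Q × Q) (S : Q → Prop) (p q : ℕ → Q) (k l : ℕ)
    (hq0 : q 0 = p k)
    (hp : ∀ i < k, p (i + 1) = (τ (p i)).1 ∨ p (i + 1) = (τ (p i)).2)
    (hq : ∀ i < l, q (i + 1) = (τ (q i)).1 ∨ q (i + 1) = (τ (q i)).2)
    (hpS : ∀ i ≤ k, S (p i)) (hqS : ∀ i ≤ l, S (q i)) :
    ∃ r : ℕ → Q, r 0 = p 0 ∧ r (k + l) = q l ∧
      (∀ i < k + l, r (i + 1) = (τ (r i)).1 ∨ r (i + 1) = (τ (r i)).2) ∧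
      ∀ i ≤ k + l, S (r i) := by
  refine ⟨fun i => if i < k then p i else q (i - k), ?_, ?_, ?_, ?_⟩
  · by_cases h : 0 < k
    · simp [h]
    · have hk : k = 0 := by omega
      subst hk
      simpa using hq0
  · have h : ¬ (k + l < k) := by omega
    simp only [if_neg h]
    congr 1
    omega
  · intro i hi
    rcases lt_trichotomy (i + 1) k with h | h | h
    · have h2 : i < k := by omega
      simp only [if_pos h, if_pos h2]
      exact hp i h2
    · have h2 : i < k := by omega
      have h3 : ¬ (i + 1 < k) := by omega
      have h4 : i + 1 - k = 0 := by omega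
      simp only [if_neg h3, if_pos h2, h4, hq0]
      rw [← h]
      exact hp i h2
    · have h2 : ¬ (i < k) := by omega
      have h3 : ¬ (i + 1 < k) := by omega
      have h4 : i + 1 - k = (i - k) + 1 := by omega
      simp only [if_neg h3, if_neg h2, h4]
      exact hq (i - k) (by omega)
  · intro i hi
    by_cases h : i < k
    · simp only [if_pos h]
      exact hpS i (by omega)
    · simp only [if_neg h]
      exact hqS (i - k) (by omega)

/-- Inside an ergodic class, every state is reachable from every state. -/
lemma ergodic_reach {Q : Type} (W : Finset Q) (σ : Q → Q × Q) (C : Set Q)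
    (hC : IsErgodicClass W σ C) (x : Q) (hx : x ∈ C) :
    ∀ y ∈ C, ∃ (l : ℕ) (q : ℕ → Q), q 0 = x ∧ q l = y ∧
      (∀ i < l, q (i + 1) = (σ (q i)).1 ∨ q (i + 1) = (σ (q i)).2) ∧
      ∀ i ≤ l, q i ∈ C := by
  set R : Set Q := {y | y ∈ C ∧ ∃ (l : ℕ) (q : ℕ → Q), q 0 = x ∧ q l = y ∧
      (∀ i < l, q (i + 1) = (σ (q i)).1 ∨ q (i + 1) = (σ (q i)).2) ∧
      ∀ i ≤ l, q i ∈ C} with hR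
  have hRsub : R ⊆ C := fun y hy => hy.1
  have hxR : x ∈ R := by
    refine ⟨hx, 0, fun _ => x, rfl, rfl, fun i hi => absurd hi (by omega), fun i _ => hx⟩
  have hclos : ∀ q ∈ R, (σ q).1 ∈ R ∧ (σ q).2 ∈ R := by
    intro y hy
    obtain ⟨hyC, l, q, hq0, hql, hqstep, hqC⟩ := hy
    have h1 : (σ y).1 ∈ C := (hC.2.2.1 y hyC).1
    have h2 : (σ y).2 ∈ C := (hC.2.2.1 y hyC).2
    constructor
    · refine ⟨h1, l + 1, fun i => if i < l + 1 then q i else (σ y).1, by simp [hq0],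
        by simp, ?_, ?_⟩
      · intro i hi
        by_cases h : i + 1 < l + 1
        · have h' : i < l + 1 := by omega
          simp only [if_pos h, if_pos h']
          exact hqstep i (by omega)
        · have hil : i = l := by omega
          subst hil
          simp only [if_neg h, if_pos (Nat.lt_succ_self i), hql]
          tauto
      · intro i hi
        by_cases h : i < l + 1
        · simp only [if_pos h]; exact hqC i (by omega)
        · simp only [if_neg h]; exact h1
    · refine ⟨h2, l + 1, fun i => if i < l + 1 then q i else (σ y).2, by simp [hq0],
        by simp, ?_, ?_⟩
      · intro i hi
        by_cases h : i + 1 < l + 1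
        · have h' : i < l + 1 := by omega
          simp only [if_pos h, if_pos h']
          exact hqstep i (by omega)
        · have hil : i = l := by omega
          subst hil
          simp only [if_neg h, if_pos (Nat.lt_succ_self i), hql]
          tauto
      · intro i hi
        by_cases h : i < l + 1
        · simp only [if_pos h]; exact hqC i (by omega)
        · simp only [if_neg h]; exact h2
  have hRC : R = C := hC.2.2.2 R hRsub ⟨x, hxR⟩ hclos
  intro y hy
  rw [← hRC] at hy
  exact hy.2

section Combine

variable {Q : Type} [LinearOrder Q]
variable (F1 F0 : Set Q) (Δ : Set (Q × Q × Q)) (W₁ W₂ : Finset Q) (σ₁ σ₂ : Q → Q × Q)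

/-- An ergodic class of `σ₁` (domain `W₁`) is an ergodic class of the combined policy. -/
lemma ergodic_left (C : Set Q) (hC : IsErgodicClass W₁ σ₁ C) :
    IsErgodicClass (W₁ ∪ W₂) (fun q => if q ∈ W₁ then σ₁ q else σ₂ q) C := by
  obtain ⟨hne, hsub, hclos, hmin⟩ := hC
  have hmem : ∀ q ∈ C, q ∈ W₁ := fun q hq => Finset.mem_coe.1 (hsub hq)
  refine ⟨hne, ?_, ?_, ?_⟩
  · intro q hq
    simp only [Finset.coe_union, Set.mem_union]
    exact Or.inl (hsub hq)
  · intro q hq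
    simp only [if_pos (hmem q hq)]
    exact hclos q hq
  · intro C' hCsub hCne hCclos
    refine hmin C' hCsub hCne ?_
    intro q hq
    have := hCclos q hq
    simpa only [if_pos (hmem q (hCsub hq))] using this

/-- An ergodic class of `σ₂` (domain `W₂`) disjoint from `W₁` is an ergodic class of
the combined policy. -/
lemma ergodic_right (C : Set Q) (hC : IsErgodicClass W₂ σ₂ C)
    (hdisj : ∀ q ∈ C, q ∉ W₁) :
    IsErgodicClass (W₁ ∪ W₂) (fun q => if q ∈ W₁ then σ₁ q else σ₂ q) C := by
  obtain ⟨hne, hsub, hclos, hmin⟩ := hC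
  refine ⟨hne, ?_, ?_, ?_⟩
  · intro q hq
    simp only [Finset.coe_union, Set.mem_union]
    exact Or.inr (hsub hq)
  · intro q hq
    simp only [if_neg (hdisj q hq)]
    exact hclos q hq
  · intro C' hCsub hCne hCclos
    refine hmin C' hCsub hCne ?_
    intro q hq
    have := hCclos q hq
    simpa only [if_neg (hdisj q (hCsub hq))] using this

/-- From a state of `W₁ ∩ F0`, the combined policy reaches a good ergodic class,
simply by following `σ₁`. -/
lemma reach_left (h1 : IsAlmostSurePolicy F1 F0 Δ W₁ σ₁)
    (q : Q) (hq : q ∈ W₁) (hqF : q ∈ F0) :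
    ∃ (k : ℕ) (p : ℕ → Q), p 0 = q ∧
      (∀ i < k, p (i + 1) = ((fun q => if q ∈ W₁ then σ₁ q else σ₂ q) (p i)).1 ∨
        p (i + 1) = ((fun q => if q ∈ W₁ then σ₁ q else σ₂ q) (p i)).2) ∧
      (∀ i ≤ k, p i ∈ F0 ∧ p i ∈ W₁ ∪ W₂) ∧
      ∃ C : Set Q,
        IsErgodicClass (W₁ ∪ W₂) (fun q => if q ∈ W₁ then σ₁ q else σ₂ q) C ∧
        C ⊆ F0 ∧ p k ∈ C := by
  obtain ⟨k, p, hp0, hpstep, hpmem, C, hC, hCF0, hpk⟩ := h1.2.2 q hq hqF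
  refine ⟨k, p, hp0, ?_, ?_, C, ergodic_left W₁ W₂ σ₁ σ₂ C hC, hCF0, hpk⟩
  · intro i hi
    have hW : p i ∈ W₁ := (hpmem i (by omega)).2
    simpa only [if_pos hW] using hpstep i hi
  · intro i hi
    exact ⟨(hpmem i hi).1, Finset.mem_union_left _ (hpmem i hi).2⟩

/-- From the start of a `σ₂`-path in `F0 ∩ W₂` that either ends in `W₁` or ends in a
good ergodic class of `σ₂` disjoint from `W₁`, the combined policy reaches a good
ergodic class. -/
lemma reach_main (h1 : IsAlmostSurePolicy F1 F0 Δ W₁ σ₁)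
    (k : ℕ) (p : ℕ → Q)
    (hpstep : ∀ i < k, p (i + 1) = (σ₂ (p i)).1 ∨ p (i + 1) = (σ₂ (p i)).2)
    (hpmem : ∀ i ≤ k, p i ∈ F0 ∧ p i ∈ W₂)
    (hend : p k ∈ W₁ ∨ ∃ C : Set Q, IsErgodicClass W₂ σ₂ C ∧ C ⊆ F0 ∧
      (∀ q ∈ C, q ∉ W₁) ∧ p k ∈ C) :
    ∃ (k' : ℕ) (p' : ℕ → Q), p' 0 = p 0 ∧
      (∀ i < k', p' (i + 1) = ((fun q => if q ∈ W₁ then σ₁ q else σ₂ q) (p' i)).1 ∨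
        p' (i + 1) = ((fun q => if q ∈ W₁ then σ₁ q else σ₂ q) (p' i)).2) ∧
      (∀ i ≤ k', p' i ∈ F0 ∧ p' i ∈ W₁ ∪ W₂) ∧
      ∃ C : Set Q,
        IsErgodicClass (W₁ ∪ W₂) (fun q => if q ∈ W₁ then σ₁ q else σ₂ q) C ∧
        C ⊆ F0 ∧ p' k' ∈ C := by
  by_cases hW : ∃ j, j ≤ k ∧ p j ∈ W₁
  · -- first hit of W₁
    classical
    obtain ⟨j, ⟨hjk, hjW⟩, hjmin⟩ :
        ∃ j, (j ≤ k ∧ p j ∈ W₁) ∧ ∀ i < j, ¬(i ≤ k ∧ p i ∈ W₁) :=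
      ⟨Nat.find hW, Nat.find_spec hW, fun i hi => Nat.find_min hW hi⟩
    -- prefix path p|[0,j] follows the combined policy
    have hprefix : ∀ i < j, p (i + 1) =
        ((fun q => if q ∈ W₁ then σ₁ q else σ₂ q) (p i)).1 ∨
        p (i + 1) = ((fun q => if q ∈ W₁ then σ₁ q else σ₂ q) (p i)).2 := by
      intro i hi
      have hni : p i ∉ W₁ := by
        intro hmem
        exact (hjmin i hi) ⟨by omega, hmem⟩
      simpa only [if_neg hni] using hpstep i (by omega)
    obtain ⟨k₂, p₂, hp20, hp2step, hp2mem, C, hC, hCF0, hp2k⟩ :=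
      reach_left F1 F0 Δ W₁ W₂ σ₁ σ₂ h1 (p j) hjW (hpmem j hjk).1
    obtain ⟨r, hr0, hrk, hrstep, hrmem⟩ :=
      path_concat (fun q => if q ∈ W₁ then σ₁ q else σ₂ q)
        (fun x => x ∈ F0 ∧ x ∈ W₁ ∪ W₂) p p₂ j k₂ hp20 hprefix hp2step
        (fun i hi => ⟨(hpmem i (by omega)).1,
          Finset.mem_union_right _ (hpmem i (by omega)).2⟩) hp2mem
    exact ⟨j + k₂, r, hr0, hrstep, hrmem, C, hC, hCF0, hrk ▸ hp2k⟩
  · -- the path never meets W₁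
    push_neg at hW
    rcases hend with hend | ⟨C, hC, hCF0, hdisj, hpk⟩
    · exact absurd hend (hW k le_rfl)
    refine ⟨k, p, rfl, ?_, ?_, C,
      ergodic_right W₁ W₂ σ₁ σ₂ C hC hdisj, hCF0, hpk⟩
    · intro i hi
      have hni : p i ∉ W₁ := hW i (by omega)
      simpa only [if_neg hni] using hpstep i hi
    · intro i hi
      exact ⟨(hpmem i hi).1, Finset.mem_union_right _ (hpmem i hi).2⟩

end Combine

/-- Combining two almost-sure policies: the policy equal to `σ₁` on `W₁` and to
`σ₂` elsewhere is an almost-sure policy with domain `W₁ ∪ W₂`. -/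
theorem stmt_10 {Q : Type} [Fintype Q] [LinearOrder Q]
    (F1 F0 : Set Q) (Δ : Set (Q × Q × Q)) (W₁ W₂ : Finset Q) (σ₁ σ₂ : Q → Q × Q)
    (h1 : IsAlmostSurePolicy F1 F0 Δ W₁ σ₁)
    (h2 : IsAlmostSurePolicy F1 F0 Δ W₂ σ₂) :
    IsAlmostSurePolicy F1 F0 Δ (W₁ ∪ W₂)
      (fun q => if q ∈ W₁ then σ₁ q else σ₂ q) := by
  obtain ⟨h1pol, h1erg, h1reach⟩ := h1
  obtain ⟨h2pol, h2erg, h2reach⟩ := h2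
  refine ⟨?_, ?_, ?_⟩
  · -- IsPolicy
    intro q hq
    by_cases hW : q ∈ W₁
    · simp only [if_pos hW]
      obtain ⟨hΔ, ht1, ht2⟩ := h1pol q hW
      exact ⟨hΔ, Finset.mem_union_left _ ht1, Finset.mem_union_left _ ht2⟩
    · have hW2 : q ∈ W₂ := by
        rcases Finset.mem_union.1 hq with h | h
        · exact absurd h hW
        · exact h
      simp only [if_neg hW]
      obtain ⟨hΔ, ht1, ht2⟩ := h2pol q hW2
      exact ⟨hΔ, Finset.mem_union_right _ ht1, Finset.mem_union_right _ ht2⟩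
  · -- ergodic classes have max in F1
    intro C hC
    obtain ⟨hne, hsub, hclos, hmin⟩ := hC
    by_cases hint : (C ∩ (W₁ : Set Q)).Nonempty
    · -- C ∩ W₁ is closed under the combined policy, so C = C ∩ W₁ ⊆ W₁
      have hclos1 : ∀ q ∈ C ∩ (W₁ : Set Q),
          ((fun q => if q ∈ W₁ then σ₁ q else σ₂ q) q).1 ∈ C ∩ (W₁ : Set Q) ∧
          ((fun q => if q ∈ W₁ then σ₁ q else σ₂ q) q).2 ∈ C ∩ (W₁ : Set Q) := by
        intro q ⟨hqC, hqW⟩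
        have hqW' : q ∈ W₁ := Finset.mem_coe.1 hqW
        have hc := hclos q hqC
        obtain ⟨_, ht1, ht2⟩ := h1pol q hqW'
        simp only [if_pos hqW'] at hc ⊢
        exact ⟨⟨hc.1, Finset.mem_coe.2 ht1⟩, ⟨hc.2, Finset.mem_coe.2 ht2⟩⟩
      have heq : C ∩ (W₁ : Set Q) = C :=
        hmin _ Set.inter_subset_left hint hclos1
      have hCW1 : C ⊆ (W₁ : Set Q) := by
        rw [← heq]; exact Set.inter_subset_right
      -- C is an ergodic class of σ₁
      have hCerg : IsErgodicClass W₁ σ₁ C := by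
        refine ⟨hne, hCW1, ?_, ?_⟩
        · intro q hq
          have := hclos q hq
          simpa only [if_pos (Finset.mem_coe.1 (hCW1 hq))] using this
        · intro C' hCsub hCne hCclos
          refine hmin C' hCsub hCne ?_
          intro q hq
          have hqW : q ∈ W₁ := Finset.mem_coe.1 (hCW1 (hCsub hq))
          simpa only [if_pos hqW] using hCclos q hq
      exact h1erg C hCerg
    · -- C is disjoint from W₁, hence C ⊆ W₂ and it is an ergodic class of σ₂
      have hdisj : ∀ q ∈ C, q ∉ W₁ := by
        intro q hq hqW
        exact hint ⟨q, hq, hqW⟩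
      have hCW2 : C ⊆ (W₂ : Set Q) := by
        intro q hq
        have := hsub hq
        simp only [Finset.coe_union, Set.mem_union] at this
        rcases this with h | h
        · exact absurd h (hdisj q hq)
        · exact h
      have hCerg : IsErgodicClass W₂ σ₂ C := by
        refine ⟨hne, hCW2, ?_, ?_⟩
        · intro q hq
          have := hclos q hq
          simpa only [if_neg (hdisj q hq)] using this
        · intro C' hCsub hCne hCclos
          refine hmin C' hCsub hCne ?_
          intro q hq
          simpa only [if_neg (hdisj q (hCsub hq))] using hCclos q hq
      exact h2erg C hCerg
  · -- reachability
    intro q hq hqF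
    have h1' : IsAlmostSurePolicy F1 F0 Δ W₁ σ₁ := ⟨h1pol, h1erg, h1reach⟩
    by_cases hW : q ∈ W₁
    · exact reach_left F1 F0 Δ W₁ W₂ σ₁ σ₂ h1' q hW hqF
    · have hW2 : q ∈ W₂ := by
        rcases Finset.mem_union.1 hq with h | h
        · exact absurd h hW
        · exact h
      obtain ⟨k, p, hp0, hpstep, hpmem, C, hC, hCF0, hpk⟩ := h2reach q hW2 hqF
      by_cases hint : ∃ c ∈ C, c ∈ W₁
      · -- extend the path inside C to reach a point of W₁, then apply reach_main
        obtain ⟨c, hcC, hcW⟩ := hint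
        obtain ⟨l, q₂, hq20, hq2l, hq2step, hq2C⟩ :=
          ergodic_reach W₂ σ₂ C hC (p k) hpk c hcC
        obtain ⟨r, hr0, hrk, hrstep, hrmem⟩ :=
          path_concat σ₂ (fun x => x ∈ F0 ∧ x ∈ W₂) p q₂ k l hq20 hpstep hq2step
            hpmem (fun i hi => ⟨hCF0 (hq2C i hi), hC.2.1 (hq2C i hi)⟩)
        obtain ⟨k', p', hp'0, hp'step, hp'mem, hgoal⟩ :=
          reach_main F1 F0 Δ W₁ W₂ σ₁ σ₂ h1' (k + l) r hrstep hrmem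
            (Or.inl (by rw [hrk, hq2l]; exact hcW))
        exact ⟨k', p', by rw [hp'0, hr0, hp0], hp'step, hp'mem, hgoal⟩
      · -- C is disjoint from W₁
        push_neg at hint
        obtain ⟨k', p', hp'0, hp'step, hp'mem, hgoal⟩ :=
          reach_main F1 F0 Δ W₁ W₂ σ₁ σ₂ h1' k p hpstep hpmem
            (Or.inr ⟨C, hC, hCF0, hint, hpk⟩)
        exact ⟨k', p', by rw [hp'0, hp0], hp'step, hp'mem, hgoal⟩
end

section
/- For every sequence (p_i)_{i∈ℕ} of nonnegative real numbers with ∑_{i∈ℕ} p_i = 1, there exists a family (L_i)_{i∈ℕ} of pairwise disjoint sets of nonempty finite binary words such that the union ⋃_i L_i is prefix-free (no word of the union is a proper prefix of another word of the union) and for every i, ∑_{w ∈ L_i} 2^{-|w|} = p_i. -/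
/-!
Cut `[0, 1)` into consecutive intervals `[s_i, s_{i+1})` of lengths `p_i`, where `s_i` are the
partial sums. A binary word `w` codes the dyadic interval `[0.w, 0.w + 2^{-|w|})`; two such
intervals are nested when one word is a prefix of the other and disjoint otherwise. Take for `L_i`
the words of the maximal dyadic subintervals of `[s_i, s_{i+1})`: these tile it up to an endpoint,
so by Lebesgue measure their weights `2^{-|w|}` add up to `p_i`, and maximality together with the
disjointness of the `[s_i, s_{i+1})` makes the union prefix-free.
-/

open Set MeasureTheory

/-- The binary fraction `0.w`, left endpoint of the dyadic interval coded by `w`. -/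
noncomputable def dyadicLeft : List Bool → ℝ
  | [] => 0
  | b :: t => (b.toNat + dyadicLeft t) / 2

noncomputable def dyadicInterval (w : List Bool) : Set ℝ :=
  Ico (dyadicLeft w) (dyadicLeft w + 2⁻¹ ^ w.length)

@[simp]
lemma dyadicInterval_nil : dyadicInterval [] = Ico 0 1 := by
  simp [dyadicInterval, dyadicLeft]

lemma mem_dyadicInterval_cons {x : ℝ} {b : Bool} {t : List Bool} :
    x ∈ dyadicInterval (b :: t) ↔ 2 * x - b.toNat ∈ dyadicInterval t := by
  simp only [dyadicInterval, dyadicLeft, List.length_cons, pow_succ, mem_Ico]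
  constructor <;> rintro ⟨h₁, h₂⟩ <;> constructor <;> linarith

lemma dyadicInterval_subset_Ico (w : List Bool) : dyadicInterval w ⊆ Ico 0 1 := by
  induction w with
  | nil => simp
  | cons b t ih =>
    intro x hx
    have ht := ih (mem_dyadicInterval_cons.1 hx)
    have hb : (b.toNat : ℝ) ≤ 1 := by exact_mod_cast b.toNat_le
    constructor <;> linarith [ht.1, ht.2]

lemma dyadicInterval_nonempty (w : List Bool) : (dyadicInterval w).Nonempty :=
  nonempty_Ico.2 (lt_add_of_pos_right _ (by positivity))

lemma volume_dyadicInterval (w : List Bool) :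
    volume (dyadicInterval w) = ENNReal.ofReal (2⁻¹ ^ w.length) := by
  rw [dyadicInterval, Real.volume_Ico, add_sub_cancel_left]

lemma dyadicInterval_anti {u w : List Bool} (h : u <+: w) :
    dyadicInterval w ⊆ dyadicInterval u := by
  induction u generalizing w with
  | nil => simpa using dyadicInterval_subset_Ico w
  | cons b t ih =>
    obtain ⟨t', rfl, ht⟩ : ∃ t', w = b :: t' ∧ t <+: t' := by
      obtain ⟨v, rfl⟩ := h
      exact ⟨t ++ v, rfl, List.prefix_append t v⟩
    intro x hx
    exact mem_dyadicInterval_cons.2 (ih ht (mem_dyadicInterval_cons.1 hx))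

lemma prefix_or_prefix_of_inter_nonempty :
    ∀ {w w' : List Bool}, (dyadicInterval w ∩ dyadicInterval w').Nonempty →
      w <+: w' ∨ w' <+: w
  | [], _, _ => Or.inl List.nil_prefix
  | _ :: _, [], _ => Or.inr List.nil_prefix
  | b :: t, b' :: t', ⟨x, hx, hx'⟩ => by
    have h := dyadicInterval_subset_Ico t (mem_dyadicInterval_cons.1 hx)
    have h' := dyadicInterval_subset_Ico t' (mem_dyadicInterval_cons.1 hx')
    -- the first letter says which half of `[0, 1)` contains `x`
    obtain rfl : b = b' := by
      cases b <;> cases b' <;> simp only [mem_Ico, Bool.toNat_true, Bool.toNat_false] at h h' <;>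
        first | rfl | (push_cast at h h'; linarith [h.1, h'.2])
    simpa only [List.cons_prefix_cons, true_and] using
      prefix_or_prefix_of_inter_nonempty
        ⟨2 * x - b.toNat, mem_dyadicInterval_cons.1 hx, mem_dyadicInterval_cons.1 hx'⟩

lemma exists_length_eq_mem_dyadicInterval {x : ℝ} (hx : x ∈ Ico 0 1) (n : ℕ) :
    ∃ w : List Bool, w.length = n ∧ x ∈ dyadicInterval w := by
  induction n generalizing x with
  | zero => exact ⟨[], rfl, by simpa using hx⟩
  | succ n ih =>
    obtain ⟨t, ht, hxt⟩ := ih (x := 2 * x - (decide (2⁻¹ ≤ x)).toNat) (by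
      by_cases h : 2⁻¹ ≤ x <;>
        simp only [h, decide_true, decide_false, Bool.toNat_true, Bool.toNat_false, mem_Ico]
          at hx ⊢ <;>
        push_cast <;> constructor <;> linarith [hx.1, hx.2])
    exact ⟨_ :: t, by simp [ht], mem_dyadicInterval_cons.2 hxt⟩

/-- Words of the maximal dyadic subintervals of `[a, b)`; the empty word, coding all of
`[0, 1)`, is excluded even when `[a, b) = [0, 1)`. -/
def maximalDyadicWords (a b : ℝ) : Set (List Bool) :=
  {w | w ≠ [] ∧ dyadicInterval w ⊆ Ico a b ∧
    ∀ u, u ≠ [] → u <+: w → dyadicInterval u ⊆ Ico a b → u = w}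

section maximalDyadicWords

variable {a b : ℝ}

lemma eq_of_prefix_of_mem_maximalDyadicWords {w w' : List Bool}
    (hw : w ∈ maximalDyadicWords a b) (hw' : w' ∈ maximalDyadicWords a b) (h : w <+: w') :
    w = w' :=
  hw'.2.2 w hw.1 h hw.2.1

lemma not_disjoint_Ico_of_prefix {c d : ℝ} {w w' : List Bool}
    (hw : w ∈ maximalDyadicWords a b) (hw' : w' ∈ maximalDyadicWords c d) (h : w <+: w') :
    ¬ Disjoint (Ico a b) (Ico c d) := by
  obtain ⟨x, hx⟩ := dyadicInterval_nonempty w'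
  exact Set.not_disjoint_iff.2 ⟨x, hw.2.1 (dyadicInterval_anti h hx), hw'.2.1 hx⟩

lemma pairwise_disjoint_dyadicInterval_maximalDyadicWords :
    Pairwise (Function.onFun Disjoint fun w : maximalDyadicWords a b => dyadicInterval w) := by
  intro w w' hne
  rw [Function.onFun, Set.disjoint_iff_inter_eq_empty, ← Set.not_nonempty_iff_eq_empty]
  intro hinter
  rcases prefix_or_prefix_of_inter_nonempty hinter with h | h
  · exact hne (Subtype.ext (eq_of_prefix_of_mem_maximalDyadicWords w.2 w'.2 h))
  · exact hne (Subtype.ext (eq_of_prefix_of_mem_maximalDyadicWords w'.2 w.2 h).symm)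

lemma exists_mem_maximalDyadicWords (ha : 0 ≤ a) (hb : b ≤ 1) {x : ℝ} (hx : x ∈ Ioo a b) :
    ∃ w ∈ maximalDyadicWords a b, x ∈ dyadicInterval w := by
  obtain ⟨n, hn⟩ : ∃ n : ℕ, (2⁻¹ : ℝ) ^ n < min (x - a) (b - x) :=
    exists_pow_lt_of_lt_one (lt_min (by linarith [hx.1]) (by linarith [hx.2])) (by norm_num)
  obtain ⟨v, hv, hxv⟩ := exists_length_eq_mem_dyadicInterval
    ⟨ha.trans hx.1.le, hx.2.trans_le hb⟩ (n + 1)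
  have hsub : ∃ k, 0 < k ∧ dyadicInterval (v.take k) ⊆ Ico a b := by
    refine ⟨n + 1, n.succ_pos, ?_⟩
    rw [List.take_of_length_le hv.le]
    intro y hy
    have hsmall : (2⁻¹ : ℝ) ^ (n + 1) ≤ 2⁻¹ ^ n :=
      pow_le_pow_of_le_one (by norm_num) (by norm_num) n.le_succ
    simp only [dyadicInterval, hv, mem_Ico] at hxv hy ⊢
    constructor <;> linarith [min_le_left (x - a) (b - x), min_le_right (x - a) (b - x)]
  -- the shortest prefix of `v` whose interval still fits in `[a, b)` is maximal
  classical
  let k := Nat.find hsub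
  obtain ⟨hk, hksub⟩ : 0 < k ∧ _ := Nat.find_spec hsub
  refine ⟨v.take k, ⟨?_, hksub, fun u hu hpre husub => ?_⟩,
    dyadicInterval_anti (List.take_prefix k v) hxv⟩
  · rw [Ne, List.take_eq_nil_iff, not_or]
    exact ⟨hk.ne', by rintro rfl; simp at hv⟩
  · have huv : u = v.take u.length :=
      List.prefix_iff_eq_take.1 (hpre.trans (List.take_prefix k v))
    have hlen : u.length = k := by
      refine le_antisymm ?_ (Nat.find_min' hsub ⟨List.length_pos_iff.2 hu, huv ▸ husub⟩)
      exact (List.length_take ▸ hpre.length_le).trans (min_le_left _ _)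
    rw [huv, hlen]

lemma tsum_maximalDyadicWords (hab : a ≤ b) (ha : 0 ≤ a) (hb : b ≤ 1) :
    ∑' w : maximalDyadicWords a b, (2⁻¹ : ℝ) ^ (w : List Bool).length = b - a := by
  have hunion : volume (⋃ w : maximalDyadicWords a b, dyadicInterval w) =
      ENNReal.ofReal (b - a) := by
    refine le_antisymm ?_ ?_
    · rw [← Real.volume_Ico]
      exact measure_mono (iUnion_subset fun w => w.2.2.1)
    · rw [← Real.volume_Ioo]
      refine measure_mono fun x hx => ?_
      obtain ⟨w, hw, hxw⟩ := exists_mem_maximalDyadicWords ha hb hx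
      exact mem_iUnion.2 ⟨⟨w, hw⟩, hxw⟩
  have hsum : ∑' w : maximalDyadicWords a b,
      ENNReal.ofReal ((2⁻¹ : ℝ) ^ (w : List Bool).length) = ENNReal.ofReal (b - a) := by
    simp_rw [← volume_dyadicInterval, ← hunion]
    exact (measure_iUnion pairwise_disjoint_dyadicInterval_maximalDyadicWords
      fun _ => measurableSet_Ico).symm
  have := congrArg ENNReal.toReal hsum
  rwa [ENNReal.tsum_toReal_eq fun _ => ENNReal.ofReal_ne_top, ENNReal.toReal_ofReal (by linarith),
    tsum_congr fun w => ENNReal.toReal_ofReal (by positivity)] at this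

end maximalDyadicWords

/-- Every probability distribution `(p_i)` on `ℕ` can be realized by pairwise
disjoint sets `L_i` of nonempty binary words, with prefix-free union, where `L_i`
has total dyadic weight `∑_{w ∈ L_i} 2^{-|w|} = p_i`. -/
theorem stmt_14 (p : ℕ → ℝ) (hnn : ∀ i : ℕ, 0 ≤ p i) (hsum : ∑' i : ℕ, p i = 1) :
    ∃ L : ℕ → Set (List Bool),
      (∀ i : ℕ, ∀ w ∈ L i, w ≠ []) ∧
      (∀ i j : ℕ, i ≠ j → Disjoint (L i) (L j)) ∧
      (∀ w ∈ ⋃ i : ℕ, L i, ∀ w' ∈ ⋃ i : ℕ, L i, w <+: w' → w = w') ∧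
      (∀ i : ℕ, ∑' w : (L i), ((2 : ℝ)⁻¹) ^ (w : List Bool).length = p i) := by
  have hp : Summable p := by
    by_contra h
    simp [tsum_eq_zero_of_not_summable h] at hsum
  let s : ℕ → ℝ := fun n => ∑ j ∈ Finset.range n, p j
  have hs_mono : Monotone s := fun m n hmn =>
    Finset.sum_le_sum_of_subset_of_nonneg (Finset.range_subset_range.2 hmn) fun j _ _ => hnn j
  have hs_le : ∀ n, s n ≤ 1 := fun n => hsum ▸ hp.sum_le_tsum _ fun j _ => hnn j
  have hs_succ : ∀ n, s (n + 1) - s n = p n := fun n => by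
    simp [s, Finset.sum_range_succ]
  have hdisj : Pairwise (Function.onFun Disjoint fun n => Ico (s n) (s (n + 1))) := by
    simpa using hs_mono.pairwise_disjoint_on_Ico_succ
  refine ⟨fun i => maximalDyadicWords (s i) (s (i + 1)), fun i w hw => hw.1, fun i j hij => ?_,
    fun w hw w' hw' h => ?_, fun i => ?_⟩
  · exact Set.disjoint_left.2 fun w hi hj =>
      not_disjoint_Ico_of_prefix hi hj List.prefix_rfl (hdisj hij)
  · obtain ⟨i, hi⟩ := mem_iUnion.1 hw
    obtain ⟨j, hj⟩ := mem_iUnion.1 hw'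
    obtain rfl : i = j := by_contra fun hij => not_disjoint_Ico_of_prefix hi hj h (hdisj hij)
    exact eq_of_prefix_of_mem_maximalDyadicWords hi hj h
  · rw [tsum_maximalDyadicWords (hs_mono i.le_succ) (Finset.sum_nonneg fun j _ => hnn j)
      (hs_le _), hs_succ]
end
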